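/- arXiv:1506.02723 — 6 statements merged into one kernel-verified Lean document; each statement's English description precedes it below -/
import Mathlib

section
/- Let A be an associative unital ring and let x, h, y ∈ A satisfy the sl(2) commutation relations ⁅h,x⁆ = 2x, ⁅x,y⁆ = h, ⁅h,y⁆ = −2y, where ⁅a,b⁆ := a*b − b*a. Then for every integer k ≥ 1 there exists an element F belonging to the subring of A generated by {x, h, y} such that ⁅x^k, y^k⁆ = (−1)^(k+1) · k! · (h · (h+1) · (h+2) ⋯ (h+(k−1))) + x · F, where h+i denotes h + i·1. -/
/-! Moving `h` past `x ^ k` shifts it by `2k`, and `x y^(k+1) = y^(k+1) x + y^k (k+1)(h - k)`.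
Together they give `y^(k+1) x^(k+1) = x (y^(k+1) x^k) - y^k x^k (k+1)(h + k)`, so modulo left
multiples `x F` the product `y^k x^k` is `(-1)^k k! h(h+1)⋯(h+k-1)` by induction on `k`.
For `k ≥ 1` the term `x^k y^k` of the commutator is itself such a left multiple. -/

section

variable {A : Type*} [Ring A]

theorem mul_pow_eq_pow_mul_add_mul {a b c : A} (hbc : Commute b c) (hab : a * b = b * (a + c))
    (k : ℕ) : a * b ^ k = b ^ k * (a + k * c) := by
  induction k with
  | zero => simp
  | succ k ih =>
    calc a * b ^ (k + 1) = b ^ k * (a * b + k * c * b) := by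
          rw [pow_succ, ← mul_assoc, ih, mul_assoc, add_mul]
      _ = b ^ k * (b * (a + c) + b * (k * c)) := by
          rw [hab, (hbc.natCast_mul_right k).eq]
      _ = b ^ (k + 1) * (a + (k + 1 : ℕ) * c) := by
          push_cast; noncomm_ring

variable {x h y : A}

theorem sl2_x_mul_y_pow_succ (hxy : x * y - y * x = h) (hhy : h * y - y * h = -(2 * y)) (k : ℕ) :
    x * y ^ (k + 1) = y ^ (k + 1) * x + y ^ k * ((k + 1 : ℕ) * (h - k)) := by
  have hxy' : x * y = y * x + h := by linear_combination (norm := noncomm_ring) hxy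
  have hhy' : h * y = y * (h + -2) := by linear_combination (norm := noncomm_ring) hhy
  have hky (n : ℕ) : (n : A) * y = y * n := Nat.cast_comm n y
  induction k with
  | zero => simpa using hxy'
  | succ k ih =>
    calc x * y ^ (k + 2) = (x * y ^ (k + 1)) * y := by rw [pow_succ _ (k + 1), mul_assoc]
      _ = y ^ (k + 1) * (x * y) + y ^ k * ((k + 1 : ℕ) * (h * y - k * y)) := by
          rw [ih]; noncomm_ring
      _ = y ^ (k + 1) * (y * x + h) + y ^ k * (y * ((k + 1 : ℕ) * (h + -2 - k))) := by
          rw [hxy', hhy', hky, ← mul_sub, ← mul_assoc _ y, hky, mul_assoc y]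
      _ = y ^ (k + 2) * x + y ^ (k + 1) * ((k + 2 : ℕ) * (h - (k + 1 : ℕ))) := by
          push_cast; noncomm_ring

theorem sl2_y_pow_succ_mul_x_pow_succ (hhx : h * x - x * h = 2 * x) (hxy : x * y - y * x = h)
    (hhy : h * y - y * h = -(2 * y)) (k : ℕ) :
    y ^ (k + 1) * x ^ (k + 1) =
      x * (y ^ (k + 1) * x ^ k) - y ^ k * x ^ k * ((k + 1 : ℕ) * (h + k)) := by
  have hhx' : h * x = x * (h + 2) := by linear_combination (norm := noncomm_ring) hhx
  have hshift : (h - k) * x ^ k = x ^ k * (h + k) := by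
    rw [sub_mul, mul_pow_eq_pow_mul_add_mul (Commute.ofNat_right x 2) hhx' k,
      (Nat.cast_commute k (x ^ k)).eq]
    noncomm_ring
  calc y ^ (k + 1) * x ^ (k + 1) = (y ^ (k + 1) * x) * x ^ k := by rw [pow_succ' x, mul_assoc]
    _ = x * (y ^ (k + 1) * x ^ k) - y ^ k * (k + 1 : ℕ) * ((h - k) * x ^ k) := by
        rw [eq_sub_of_add_eq (sl2_x_mul_y_pow_succ hxy hhy k).symm]; noncomm_ring
    _ = x * (y ^ (k + 1) * x ^ k) - y ^ k * x ^ k * ((k + 1 : ℕ) * (h + k)) := by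
        rw [hshift, mul_assoc (y ^ k), ← mul_assoc _ (x ^ k), Nat.cast_comm]; noncomm_ring

theorem sl2_y_pow_mul_x_pow (hhx : h * x - x * h = 2 * x) (hxy : x * y - y * x = h)
    (hhy : h * y - y * h = -(2 * y)) (k : ℕ) :
    ∃ F ∈ Subring.closure ({x, h, y} : Set A), y ^ k * x ^ k =
      (-1) ^ k * k.factorial * ((List.range k).map (fun i : ℕ => h + (i : A))).prod + x * F := by
  set S := Subring.closure ({x, h, y} : Set A)
  have hx : x ∈ S := Subring.subset_closure (by simp)
  have hh : h ∈ S := Subring.subset_closure (by simp)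
  have hy : y ∈ S := Subring.subset_closure (by simp)
  induction k with
  | zero => exact ⟨0, S.zero_mem, by simp⟩
  | succ k ih =>
    obtain ⟨F, hF, hk⟩ := ih
    refine ⟨y ^ (k + 1) * x ^ k - F * ((k + 1 : ℕ) * (h + k)), ?_, ?_⟩
    · exact S.sub_mem (S.mul_mem (S.pow_mem hy _) (S.pow_mem hx _))
        (S.mul_mem hF (S.mul_mem (natCast_mem S _) (S.add_mem hh (natCast_mem S _))))
    · set P := ((List.range k).map (fun i : ℕ => h + (i : A))).prod
      have hP : P * ((k + 1 : ℕ) * (h + k)) = (k + 1 : ℕ) * (P * (h + k)) := by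
        rw [← mul_assoc, ← mul_assoc, (Nat.cast_commute (k + 1) P).eq]
      calc y ^ (k + 1) * x ^ (k + 1)
          = x * (y ^ (k + 1) * x ^ k)
            - ((-1) ^ k * k.factorial * P + x * F) * ((k + 1 : ℕ) * (h + k)) := by
            rw [sl2_y_pow_succ_mul_x_pow_succ hhx hxy hhy, hk]
        _ = (-1) ^ (k + 1) * (k.factorial * (k + 1 : ℕ) : A) * (P * (h + k))
            + x * (y ^ (k + 1) * x ^ k - F * ((k + 1 : ℕ) * (h + k))) := by
            rw [add_mul, mul_assoc _ P, hP]; noncomm_ring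
        _ = _ := by rw [List.prod_range_succ, Nat.factorial_succ, Nat.mul_comm, Nat.cast_mul]

end

/-- The `sl(2)` identity of the proof of Theorem 7.2: in an associative unital ring, if
`x, h, y` form an `sl(2)` triple (with commutator `⁅a,b⁆ = a*b - b*a`), then for every `k ≥ 1`
there is an element `F` of the subring generated by `{x, h, y}` with
`⁅x^k, y^k⁆ = (-1)^(k+1) * k! * (h*(h+1)*⋯*(h+(k-1))) + x * F`. -/
theorem sl2_commutator_pow_pow {A : Type*} [Ring A] (x h y : A)
    (hhx : h * x - x * h = 2 * x)
    (hxy : x * y - y * x = h)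
    (hhy : h * y - y * h = -(2 * y)) :
    ∀ k : ℕ, 1 ≤ k →
      ∃ F ∈ Subring.closure ({x, h, y} : Set A),
        x ^ k * y ^ k - y ^ k * x ^ k
          = (-1 : A) ^ (k + 1) * (Nat.factorial k : A) *
              (((List.range k).map (fun i : ℕ => h + (i : A))).prod) + x * F := by
  intro k hk
  obtain ⟨m, rfl⟩ := Nat.exists_eq_add_of_le' hk
  obtain ⟨F, hF, hyx⟩ := sl2_y_pow_mul_x_pow hhx hxy hhy (m + 1)
  have hx : x ∈ Subring.closure ({x, h, y} : Set A) := Subring.subset_closure (by simp)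
  have hy : y ∈ Subring.closure ({x, h, y} : Set A) := Subring.subset_closure (by simp)
  refine ⟨x ^ m * y ^ (m + 1) - F, sub_mem (mul_mem (pow_mem hx _) (pow_mem hy _)) hF, ?_⟩
  have hx_left : x ^ (m + 1) * y ^ (m + 1) = x * (x ^ m * y ^ (m + 1)) := by
    rw [pow_succ', mul_assoc]
  rw [hx_left, hyx, pow_succ (-1 : A) (m + 1)]
  noncomm_ring
end

section
/- Let n ≥ 1, let s : ℝⁿ → ℝ be C^∞, let ℓ ≥ 1 be an integer, and suppose there is a C^∞ function A : ℝⁿ → ℝ such that ‖∇s(x)‖² = 1 + s(x)^ℓ · A(x) for all x, where ∇s is the gradient. Define s̄(x) := s(x) · (1 − s(x)^ℓ · A(x) / (2(ℓ+1))). Then there exists a C^∞ function A′ : ℝⁿ → ℝ such that ‖∇s̄(x)‖² = 1 + s(x)^(ℓ+1) · A′(x) for all x. -/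
/-!
With `u = sˡ·A` and `c = 2(ℓ+1)` we have `s̄ = s - s^(ℓ+1)·A/c`, so
`∇s̄ = (1 - u/2)·∇s - (s^(ℓ+1)/c)·∇A`. Since `‖∇s‖² = 1 + u`, the main term of `‖∇s̄‖²` is
`(1 - u/2)²(1 + u) = 1 + u²(u - 3)/4`: the first-order error `u` cancels, and
`u² = s^(2ℓ)·A²` is divisible by `s^(ℓ+1)` because `ℓ ≥ 1`. The remaining terms carry the
factor `s^(ℓ+1)` explicitly.
-/

open InnerProductSpace

variable {F : Type*} [NormedAddCommGroup F] [InnerProductSpace ℝ F]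

theorem ContDiff.gradient [CompleteSpace F] {f : F → ℝ} {m n : WithTop ℕ∞}
    (hf : ContDiff ℝ n f) (hmn : m + 1 ≤ n) : ContDiff ℝ m (gradient f) :=
  (toDual ℝ F).symm.contDiff.comp (hf.fderiv_right hmn)

theorem HasGradientAt.mul_one_sub_pow_mul_div [CompleteSpace F] {s A : F → ℝ} {s' A' x : F}
    (hs : HasGradientAt s s' x) (hA : HasGradientAt A A' x) (ℓ : ℕ) :
    HasGradientAt (fun z => s z * (1 - s z ^ ℓ * A z / (2 * ((ℓ : ℝ) + 1))))
      ((1 - s x ^ ℓ * A x / 2) • s' - (s x ^ (ℓ + 1) / (2 * ((ℓ : ℝ) + 1))) • A') x := by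
  rw [hasGradientAt_iff_hasFDerivAt] at *
  have hexpand : (fun z => s z * (1 - s z ^ ℓ * A z / (2 * ((ℓ : ℝ) + 1))))
      = fun z => s z - s z ^ (ℓ + 1) * A z * (2 * ((ℓ : ℝ) + 1))⁻¹ := by
    funext z
    ring
  rw [hexpand]
  refine (hs.sub (((hs.pow (ℓ + 1)).fun_mul hA).mul_const _)).congr_fderiv ?_
  ext v
  simp only [mul_inv_rev, add_tsub_cancel_right, nsmul_eq_mul, Nat.cast_add, Nat.cast_one,
    smul_add, sub_apply, toDual_apply_apply, add_apply,
    smul_apply, smul_eq_mul, map_sub, map_smul]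
  field_simp
  ring

theorem norm_sq_one_sub_half_smul_sub_smul {v w : F} {u b : ℝ} (hv : ‖v‖ ^ 2 = 1 + u) :
    ‖(1 - u / 2) • v - b • w‖ ^ 2
      = 1 + u ^ 2 * (u - 3) / 4 - 2 * b * (1 - u / 2) * inner ℝ v w + b ^ 2 * ‖w‖ ^ 2 := by
  rw [norm_sub_sq_real, norm_smul, norm_smul, real_inner_smul_left, real_inner_smul_right,
    mul_pow, mul_pow, Real.norm_eq_abs, Real.norm_eq_abs, sq_abs, sq_abs, hv]
  ring

theorem unit_defining_function_induction_step_general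
    (n : ℕ) (s : EuclideanSpace ℝ (Fin n) → ℝ)
    (hs : ContDiff ℝ (⊤ : ℕ∞) s) (ℓ : ℕ) (hℓ : 1 ≤ ℓ)
    (A : EuclideanSpace ℝ (Fin n) → ℝ) (hA : ContDiff ℝ (⊤ : ℕ∞) A)
    (h : ∀ x, ‖gradient s x‖ ^ 2 = 1 + s x ^ ℓ * A x) :
    ∃ A' : EuclideanSpace ℝ (Fin n) → ℝ, ContDiff ℝ (⊤ : ℕ∞) A' ∧
      ∀ x, ‖gradient (fun z => s z * (1 - s z ^ ℓ * A z / (2 * ((ℓ : ℝ) + 1)))) x‖ ^ 2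
        = 1 + s x ^ (ℓ + 1) * A' x := by
  obtain ⟨k, rfl⟩ := Nat.exists_eq_add_of_le' hℓ
  refine ⟨fun x => s x ^ k * A x ^ 2 * (s x ^ (k + 1) * A x - 3) / 4
      - 2 * (1 - s x ^ (k + 1) * A x / 2) * inner ℝ (gradient s x) (gradient A x) / (2 * (k + 2))
      + s x ^ (k + 2) * ‖gradient A x‖ ^ 2 / (2 * (k + 2)) ^ 2, ?_, fun x => ?_⟩
  · have hgs := hs.gradient (m := (⊤ : ℕ∞)) (by simp)
    have hgA := hA.gradient (m := (⊤ : ℕ∞)) (by simp)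
    have := hgs.inner ℝ hgA
    have := hgA.norm_sq ℝ
    fun_prop
  · have hgrad := (hs.differentiable (by simp) x).hasGradientAt.mul_one_sub_pow_mul_div
      (hA.differentiable (by simp) x).hasGradientAt (k + 1)
    rw [hgrad.gradient, norm_sq_one_sub_half_smul_sub_smul (h x)]
    push_cast
    field_simp
    ring

/-- Flat-background instance of Lemma 2.4: if `s : ℝⁿ → ℝ` is `C^∞` with
`‖∇s‖² = 1 + sˡ·A` for a smooth `A` and `ℓ ≥ 1`, then
`s̄ := s·(1 - sˡ·A/(2(ℓ+1)))` satisfies `‖∇s̄‖² = 1 + s^(ℓ+1)·A'` for some smooth `A'`. -/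
theorem unit_defining_function_induction_step
    (n : ℕ) (hn : 1 ≤ n) (s : EuclideanSpace ℝ (Fin n) → ℝ)
    (hs : ContDiff ℝ (⊤ : ℕ∞) s) (ℓ : ℕ) (hℓ : 1 ≤ ℓ)
    (A : EuclideanSpace ℝ (Fin n) → ℝ) (hA : ContDiff ℝ (⊤ : ℕ∞) A)
    (h : ∀ x, ‖gradient s x‖ ^ 2 = 1 + s x ^ ℓ * A x) :
    ∃ A' : EuclideanSpace ℝ (Fin n) → ℝ, ContDiff ℝ (⊤ : ℕ∞) A' ∧
      ∀ x, ‖gradient (fun z => s z * (1 - s z ^ ℓ * A z / (2 * ((ℓ : ℝ) + 1)))) x‖ ^ 2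
        = 1 + s x ^ (ℓ + 1) * A' x :=
  unit_defining_function_induction_step_general n s hs ℓ hℓ A hA h
end

section
/- Let n ≥ 1, let Ω ⊆ ℝⁿ be open, and let s : Ω → ℝ be C^∞ with ∇s(x) ≠ 0 for every x ∈ Ω. Define s̄ := s / ‖∇s‖. Then s̄ is C^∞ on Ω, s̄ has the same zero set as s, and there exists a C^∞ function A : Ω → ℝ such that ‖∇s̄(x)‖² = 1 + s(x) · A(x) for all x ∈ Ω. -/
/-!
Write `s̄ = s · g` with `g = ‖∇s‖⁻¹`. The product rule gives `∇s̄ = s ∇g + g ∇s`, and since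
`g ∇s` is a unit vector, expanding the square yields
`‖∇s̄‖² = 1 + s · (s ‖∇g‖² + 2 g ⟪∇g, ∇s⟫)`; the bracket is smooth because `g` and its
gradient are.
-/

open InnerProductSpace

open scoped Gradient

section Gradient

variable {F : Type*} [NormedAddCommGroup F] [InnerProductSpace ℝ F] [CompleteSpace F]

theorem ContDiffOn.gradient_of_isOpen {f : F → ℝ} {s : Set F} {m n : WithTop ℕ∞}
    (hf : ContDiffOn ℝ n f s) (hs : IsOpen s) (hmn : m + 1 ≤ n) :
    ContDiffOn ℝ m (∇ f) s :=
  (toDual ℝ F).symm.toContinuousLinearEquiv.toContinuousLinearMap.contDiff.comp_contDiffOn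
    (hf.fderiv_of_isOpen hs hmn)

theorem HasGradientAt.mul {f g : F → ℝ} {f' g' x : F} (hf : HasGradientAt f f' x)
    (hg : HasGradientAt g g' x) :
    HasGradientAt (fun y => f y * g y) (f x • g' + g x • f') x := by
  rw [hasGradientAt_iff_hasFDerivAt, map_add, map_smul, map_smul]
  exact hf.hasFDerivAt.mul hg.hasFDerivAt

end Gradient

theorem norm_smul_add_inv_norm_smul_sq {F : Type*} [NormedAddCommGroup F]
    [InnerProductSpace ℝ F] (a : ℝ) (v : F) {w : F} (hw : w ≠ 0) :
    ‖a • v + ‖w‖⁻¹ • w‖ ^ 2 = 1 + a * (a * ‖v‖ ^ 2 + 2 * ‖w‖⁻¹ * inner ℝ v w) := by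
  have hw' : ‖w‖ ≠ 0 := norm_ne_zero_iff.2 hw
  rw [norm_add_sq_real, norm_smul, norm_smul, real_inner_smul_left, real_inner_smul_right,
    Real.norm_eq_abs, norm_inv, norm_norm]
  field_simp
  rw [sq_abs]
  ring

theorem normal_defining_function_exists_general
    (n : ℕ) (Ω : Set (EuclideanSpace ℝ (Fin n))) (hΩ : IsOpen Ω)
    (s : EuclideanSpace ℝ (Fin n) → ℝ) (hs : ContDiffOn ℝ (⊤ : ℕ∞) s Ω)
    (hgrad : ∀ x ∈ Ω, gradient s x ≠ 0) :
    ContDiffOn ℝ (⊤ : ℕ∞) (fun z => s z / ‖gradient s z‖) Ω ∧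
    (∀ x ∈ Ω, (s x / ‖gradient s x‖ = 0 ↔ s x = 0)) ∧
    ∃ A : EuclideanSpace ℝ (Fin n) → ℝ, ContDiffOn ℝ (⊤ : ℕ∞) A Ω ∧
      ∀ x ∈ Ω, ‖gradient (fun z => s z / ‖gradient s z‖) x‖ ^ 2 = 1 + s x * A x := by
  have hnorm_ne : ∀ x ∈ Ω, ‖∇ s x‖ ≠ 0 := fun x hx => norm_ne_zero_iff.2 (hgrad x hx)
  have hG : ContDiffOn ℝ (⊤ : ℕ∞) (∇ s) Ω := hs.gradient_of_isOpen hΩ (by exact_mod_cast le_top)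
  have hnorm : ContDiffOn ℝ (⊤ : ℕ∞) (fun z => ‖∇ s z‖) Ω := fun x hx =>
    (hG x hx).norm ℝ (hgrad x hx)
  set g := fun z => ‖∇ s z‖⁻¹
  have hg : ContDiffOn ℝ (⊤ : ℕ∞) g Ω := hnorm.inv hnorm_ne
  have hv : ContDiffOn ℝ (⊤ : ℕ∞) (∇ g) Ω := hg.gradient_of_isOpen hΩ (by exact_mod_cast le_top)
  refine ⟨hs.div hnorm hnorm_ne, fun x hx => by simp [hnorm_ne x hx],
    fun z => s z * ‖∇ g z‖ ^ 2 + 2 * g z * inner ℝ (∇ g z) (∇ s z),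
    (hs.mul (hv.norm_sq ℝ)).add ((contDiffOn_const.mul hg).mul (hv.inner ℝ hG)),
    fun x hx => ?_⟩
  have hsbar : HasGradientAt (fun z => s z / ‖∇ s z‖) (s x • ∇ g x + g x • ∇ s x) x := by
    simp only [div_eq_mul_inv]
    exact ((hs.differentiableOn (by simp)).hasGradientAt (hΩ.mem_nhds hx)).mul
      ((hg.differentiableOn (by simp)).hasGradientAt (hΩ.mem_nhds hx))
  rw [hsbar.gradient, norm_smul_add_inv_norm_smul_sq _ _ (hgrad x hx)]

/-- Flat-background instance of the claim of Section 2.2: if `s` is `C^∞` on an open set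
`Ω ⊆ ℝⁿ` with nonvanishing gradient, then `s̄ := s/‖∇s‖` is `C^∞` on `Ω`, has the same zero
set as `s`, and is a normal defining function: `‖∇s̄‖² = 1 + s·A` for a smooth `A`. -/
theorem normal_defining_function_exists
    (n : ℕ) (hn : 1 ≤ n) (Ω : Set (EuclideanSpace ℝ (Fin n))) (hΩ : IsOpen Ω)
    (s : EuclideanSpace ℝ (Fin n) → ℝ) (hs : ContDiffOn ℝ (⊤ : ℕ∞) s Ω)
    (hgrad : ∀ x ∈ Ω, gradient s x ≠ 0) :
    ContDiffOn ℝ (⊤ : ℕ∞) (fun z => s z / ‖gradient s z‖) Ω ∧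
    (∀ x ∈ Ω, (s x / ‖gradient s x‖ = 0 ↔ s x = 0)) ∧
    ∃ A : EuclideanSpace ℝ (Fin n) → ℝ, ContDiffOn ℝ (⊤ : ℕ∞) A Ω ∧
      ∀ x ∈ Ω, ‖gradient (fun z => s z / ‖gradient s z‖) x‖ ^ 2 = 1 + s x * A x :=
  normal_defining_function_exists_general n Ω hΩ s hs hgrad
end

section
/- Let d ≥ 3, let Ω ⊆ ℝ^d be open, and let σ : Ω → ℝ be C^∞. Define S(σ) := ‖∇σ‖² − (2/d)·σ·Δσ. Let k ≥ 1 be an integer with k ≠ d, and suppose there is a C^∞ function A : Ω → ℝ with S(σ)(x) = 1 + σ(x)^k · A(x) for all x ∈ Ω. Set f := −d·A/(2(d−k)(k+1)) and σ′ := σ + σ^(k+1) · f. Then there exists a C^∞ function A′ : Ω → ℝ such that S(σ′)(x) = 1 + σ(x)^(k+1) · A′(x) for all x ∈ Ω. -/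
/-- The Euclidean Laplacian of `f : ℝ^d → ℝ` at `x`: the trace of the second derivative. -/
noncomputable def euclideanLaplacian {d : ℕ} (f : EuclideanSpace ℝ (Fin d) → ℝ)
    (x : EuclideanSpace ℝ (Fin d)) : ℝ :=
  ∑ i : Fin d, iteratedFDeriv ℝ 2 f x ![EuclideanSpace.single i 1, EuclideanSpace.single i 1]

/-- The flat-background singular Yamabe operator `S(σ) = ‖∇σ‖² - (2/d)·σ·Δσ`. -/
noncomputable def singularYamabeS {d : ℕ} (σ : EuclideanSpace ℝ (Fin d) → ℝ)
    (x : EuclideanSpace ℝ (Fin d)) : ℝ :=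
  ‖gradient σ x‖ ^ 2 - (2 / (d : ℝ)) * σ x * euclideanLaplacian σ x

/-! Write `σ' = σ + σ^(k+1) f`. The product and power rules for the gradient and the Laplacian
give `S(σ') = S(σ) + 2(k+1)(1 - k/d) σ^k f ‖∇σ‖² + σ^(k+1) Q` with `Q` smooth. Since
`‖∇σ‖² = S(σ) + (2/d) σ Δσ = 1 + O(σ)` and `f` is chosen so that `2(k+1)(1 - k/d) f = -A`,
the `σ^k` terms cancel: `S(σ') = 1 + σ^k A - σ^k A + O(σ^(k+1))`. -/

open InnerProductSpace Laplacian Gradient Filter Topology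
open scoped RealInnerProductSpace ContDiff

section Calculus

variable {E : Type*} [NormedAddCommGroup E] [InnerProductSpace ℝ E] [FiniteDimensional ℝ E]
  {u v : E → ℝ} {x : E}

theorem gradient_fun_add (hu : DifferentiableAt ℝ u x) (hv : DifferentiableAt ℝ v x) :
    ∇ (fun y => u y + v y) x = ∇ u x + ∇ v x := by
  simp [gradient, fderiv_fun_add hu hv]

theorem gradient_fun_mul (hu : DifferentiableAt ℝ u x) (hv : DifferentiableAt ℝ v x) :
    ∇ (fun y => u y * v y) x = u x • ∇ v x + v x • ∇ u x := by
  simp [gradient, fderiv_fun_mul hu hv]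

theorem gradient_fun_pow (hu : DifferentiableAt ℝ u x) (n : ℕ) :
    ∇ (fun y => u y ^ n) x = (n * u x ^ (n - 1)) • ∇ u x := by
  simp [gradient, fderiv_fun_pow n hu]

theorem OrthonormalBasis.sum_fderiv_mul_fderiv {ι : Type*} [Fintype ι]
    (b : OrthonormalBasis ι ℝ E) (u v : E → ℝ) (x : E) :
    ∑ i, fderiv ℝ u x (b i) * fderiv ℝ v x (b i) = ⟪∇ u x, ∇ v x⟫ := by
  rw [← b.sum_inner_mul_inner]
  simp only [real_inner_comm _ (b _), inner_gradient_left]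

theorem OrthonormalBasis.laplacian_eq_sum_fderiv_fderiv {ι : Type*} [Fintype ι]
    (b : OrthonormalBasis ι ℝ E) (u : E → ℝ) (x : E) :
    Δ u x = ∑ i, fderiv ℝ (fderiv ℝ u) x (b i) (b i) := by
  simp [laplacian_eq_iteratedFDeriv_orthonormalBasis u b, iteratedFDeriv_two_apply]

theorem laplacian_fun_add (hu : ContDiffAt ℝ 2 u x) (hv : ContDiffAt ℝ 2 v x) :
    Δ (fun y => u y + v y) x = Δ u x + Δ v x :=
  hu.laplacian_add hv

theorem laplacian_fun_mul (hu : ContDiffAt ℝ 2 u x) (hv : ContDiffAt ℝ 2 v x) :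
    Δ (fun y => u y * v y) x = u x * Δ v x + 2 * ⟪∇ u x, ∇ v x⟫ + v x * Δ u x := by
  have hD : fderiv ℝ (fun y => u y * v y) =ᶠ[𝓝 x]
      fun y => u y • fderiv ℝ v y + v y • fderiv ℝ u y := by
    filter_upwards [hu.eventually (by simp), hv.eventually (by simp)] with y hu hv
    exact fderiv_fun_mul (hu.differentiableAt (by simp)) (hv.differentiableAt (by simp))
  have hDu : DifferentiableAt ℝ (fderiv ℝ u) x :=
    (hu.fderiv_right (m := 1) le_rfl).differentiableAt (by simp)
  have hDv : DifferentiableAt ℝ (fderiv ℝ v) x :=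
    (hv.fderiv_right (m := 1) le_rfl).differentiableAt (by simp)
  have hD2 := ((hu.differentiableAt (by simp)).hasFDerivAt.fun_smul hDv.hasFDerivAt).fun_add
    ((hv.differentiableAt (by simp)).hasFDerivAt.fun_smul hDu.hasFDerivAt)
  let b := stdOrthonormalBasis ℝ E
  rw [b.laplacian_eq_sum_fderiv_fderiv, hD.fderiv_eq, hD2.fderiv,
    b.laplacian_eq_sum_fderiv_fderiv, b.laplacian_eq_sum_fderiv_fderiv,
    ← b.sum_fderiv_mul_fderiv]
  simp only [add_apply, smul_apply, ContinuousLinearMap.smulRight_apply, smul_eq_mul,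
    Finset.mul_sum, ← Finset.sum_add_distrib]
  exact Finset.sum_congr rfl fun i _ => by ring

theorem laplacian_fun_pow (hu : ContDiffAt ℝ 2 u x) (n : ℕ) :
    Δ (fun y => u y ^ (n + 1)) x
      = (n + 1) * u x ^ n * Δ u x + (n + 1) * n * u x ^ (n - 1) * ‖∇ u x‖ ^ 2 := by
  induction n with
  | zero => simp
  | succ n ih =>
    simp only [pow_succ _ (n + 1)]
    rw [laplacian_fun_mul (hu.pow _) hu, ih, gradient_fun_pow (hu.differentiableAt (by simp)),
      real_inner_smul_left, real_inner_self_eq_norm_sq]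
    rcases n with _ | n
    · simp only [zero_add, tsub_self, zero_tsub]; ring
    · simp only [Nat.add_sub_cancel]; push_cast; ring

variable {s : Set E} {m n : WithTop ℕ∞}

theorem ContDiffOn.inner_gradient (hu : ContDiffOn ℝ n u s) (hv : ContDiffOn ℝ n v s)
    (hs : IsOpen s) (hmn : m + 1 ≤ n) : ContDiffOn ℝ m (fun x => ⟪∇ u x, ∇ v x⟫) s := by
  simp_rw [← (stdOrthonormalBasis ℝ E).sum_fderiv_mul_fderiv]
  exact ContDiffOn.sum fun i _ => ((hu.fderiv_of_isOpen hs hmn).clm_apply contDiffOn_const).mul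
    ((hv.fderiv_of_isOpen hs hmn).clm_apply contDiffOn_const)

theorem ContDiffOn.laplacian (hu : ContDiffOn ℝ n u s) (hs : IsOpen s) (hmn : m + 2 ≤ n) :
    ContDiffOn ℝ m (Δ u) s := by
  have hD2 := (hu.fderiv_of_isOpen hs (m := m + 1) (by rwa [add_assoc, one_add_one_eq_two])
    ).fderiv_of_isOpen hs le_rfl
  rw [funext ((stdOrthonormalBasis ℝ E).laplacian_eq_sum_fderiv_fderiv u)]
  exact ContDiffOn.sum fun i _ => (hD2.clm_apply contDiffOn_const).clm_apply contDiffOn_const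

end Calculus

section SingularYamabe

variable {d : ℕ}

theorem euclideanLaplacian_eq_laplacian (u : EuclideanSpace ℝ (Fin d) → ℝ) :
    euclideanLaplacian u = Δ u := by
  ext x
  simp [laplacian_eq_iteratedFDeriv_orthonormalBasis u (EuclideanSpace.basisFun (Fin d) ℝ),
    euclideanLaplacian]

theorem singularYamabeS_eq (σ : EuclideanSpace ℝ (Fin d) → ℝ) (x : EuclideanSpace ℝ (Fin d)) :
    singularYamabeS σ x = ‖∇ σ x‖ ^ 2 - 2 / d * σ x * Δ σ x := by
  rw [singularYamabeS, euclideanLaplacian_eq_laplacian]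

theorem singularYamabeS_add_pow_mul {Ω : Set (EuclideanSpace ℝ (Fin d))} (hΩ : IsOpen Ω)
    {σ f : EuclideanSpace ℝ (Fin d) → ℝ} (hσ : ContDiffOn ℝ (⊤ : ℕ∞) σ Ω)
    (hf : ContDiffOn ℝ (⊤ : ℕ∞) f Ω) {k : ℕ} (hk : 1 ≤ k) :
    ∃ Q : EuclideanSpace ℝ (Fin d) → ℝ, ContDiffOn ℝ (⊤ : ℕ∞) Q Ω ∧ ∀ x ∈ Ω,
      singularYamabeS (fun z => σ z + σ z ^ (k + 1) * f z) x
        = singularYamabeS σ x + 2 * (k + 1) * (1 - k / d) * σ x ^ k * f x * ‖∇ σ x‖ ^ 2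
          + σ x ^ (k + 1) * Q x := by
  obtain ⟨j, rfl⟩ := Nat.exists_eq_add_of_le' hk
  refine ⟨fun x => (j + 2) * σ x ^ j * f x ^ 2 * ⟪∇ σ x, ∇ σ x⟫ * ((j + 2) - 2 * (j + 1) / d)
    - 2 / d * f x * ((j + 2) + (1 + (j + 2) * σ x ^ (j + 1) * f x)) * Δ σ x
    - 2 / d * (1 + σ x ^ (j + 1) * f x) * (σ x * Δ f x + 2 * (j + 2) * ⟪∇ σ x, ∇ f x⟫)
    + 2 * (1 + (j + 2) * σ x ^ (j + 1) * f x) * ⟪∇ σ x, ∇ f x⟫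
    + σ x ^ (j + 2) * ⟪∇ f x, ∇ f x⟫, ?_, fun x hx => ?_⟩
  · have := hσ.inner_gradient hσ hΩ (m := ∞) (by simp)
    have := hσ.inner_gradient hf hΩ (m := ∞) (by simp)
    have := hf.inner_gradient hf hΩ (m := ∞) (by simp)
    have := hσ.laplacian hΩ (m := ∞) le_rfl
    have := hf.laplacian hΩ (m := ∞) le_rfl
    fun_prop
  have hσ2 : ContDiffAt ℝ 2 σ x := (hσ.contDiffAt (hΩ.mem_nhds hx)).of_le ENat.LEInfty.out
  have hf2 : ContDiffAt ℝ 2 f x := (hf.contDiffAt (hΩ.mem_nhds hx)).of_le ENat.LEInfty.out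
  have hσ1 := hσ2.differentiableAt (by simp)
  have hf1 := hf2.differentiableAt (by simp)
  have hpow1 : DifferentiableAt ℝ (fun y => σ y ^ (j + 1 + 1)) x := by fun_prop
  have hpow2 : ContDiffAt ℝ 2 (fun y => σ y ^ (j + 1 + 1)) x := by fun_prop
  have hprod : DifferentiableAt ℝ (fun y => σ y ^ (j + 1 + 1) * f y) x := by fun_prop
  rw [singularYamabeS_eq, singularYamabeS_eq, gradient_fun_add hσ1 hprod,
    gradient_fun_mul hpow1 hf1, gradient_fun_pow hσ1, laplacian_fun_add hσ2 (hpow2.mul hf2),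
    laplacian_fun_mul hpow2 hf2, laplacian_fun_pow hσ2, gradient_fun_pow hσ1]
  simp only [← real_inner_self_eq_norm_sq, inner_add_left, inner_add_right, real_inner_smul_left,
    real_inner_smul_right, real_inner_comm (∇ f x)]
  push_cast
  ring

end SingularYamabe

/-- Flat-background instance of the first part of Lemma 4.5: if `S(σ) = 1 + σᵏ·A` on `Ω`
with `1 ≤ k ≠ d`, then `σ' := σ + σ^(k+1)·f` with `f := -d·A/(2(d-k)(k+1))` satisfies
`S(σ') = 1 + σ^(k+1)·A'` on `Ω` for some smooth `A'`. -/
theorem singular_yamabe_induction_step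
    (d : ℕ) (hd : 3 ≤ d) (Ω : Set (EuclideanSpace ℝ (Fin d))) (hΩ : IsOpen Ω)
    (σ A : EuclideanSpace ℝ (Fin d) → ℝ)
    (hσ : ContDiffOn ℝ (⊤ : ℕ∞) σ Ω) (hA : ContDiffOn ℝ (⊤ : ℕ∞) A Ω)
    (k : ℕ) (hk : 1 ≤ k) (hkd : k ≠ d)
    (h : ∀ x ∈ Ω, singularYamabeS σ x = 1 + σ x ^ k * A x) :
    ∃ A' : EuclideanSpace ℝ (Fin d) → ℝ, ContDiffOn ℝ (⊤ : ℕ∞) A' Ω ∧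
      ∀ x ∈ Ω,
        singularYamabeS
          (fun z => σ z + σ z ^ (k + 1) *
            (-((d : ℝ) * A z) / (2 * ((d : ℝ) - (k : ℝ)) * ((k : ℝ) + 1)))) x
        = 1 + σ x ^ (k + 1) * A' x := by
  obtain ⟨Q, hQ, hS'⟩ := singularYamabeS_add_pow_mul hΩ hσ (f := fun z =>
    -((d : ℝ) * A z) / (2 * ((d : ℝ) - (k : ℝ)) * ((k : ℝ) + 1))) (by fun_prop) hk
  obtain ⟨j, rfl⟩ := Nat.exists_eq_add_of_le' hk
  have hL := hσ.laplacian hΩ (m := ∞) le_rfl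
  refine ⟨fun x => Q x - A x * (σ x ^ j * A x + 2 / d * Δ σ x), by fun_prop, fun x hx => ?_⟩
  have hd0 : (d : ℝ) ≠ 0 := Nat.cast_ne_zero.mpr (by omega)
  have hdk : (d : ℝ) - (j + 1 : ℕ) ≠ 0 := sub_ne_zero.mpr (by exact_mod_cast hkd.symm)
  have hcoef : 2 * ((j + 1 : ℕ) + 1) * (1 - (j + 1 : ℕ) / d) *
      (-(d * A x) / (2 * (d - (j + 1 : ℕ)) * ((j + 1 : ℕ) + 1))) = -A x := by
    field_simp
  have hS := h x hx
  rw [singularYamabeS_eq] at hS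
  rw [hS' x hx, h x hx]
  linear_combination (σ x ^ (j + 1) * ‖∇ σ x‖ ^ 2) * hcoef - σ x ^ (j + 1) * A x * hS
end

section
/- Let d ≥ 3, let Ω ⊆ ℝ^d be open, and let σ : Ω → ℝ be C^∞. Define S(σ) := ‖∇σ‖² − (2/d)·σ·Δσ. Suppose there is a C^∞ function A : Ω → ℝ with S(σ)(x) = 1 + σ(x) · A(x) for all x ∈ Ω (σ is a normal defining density in the flat scale). Then there exist C^∞ functions w and B on Ω such that σ̄ := σ · (1 + σ·w) satisfies S(σ̄)(x) = 1 + σ(x)^d · B(x) for all x ∈ Ω. -/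
/-!
Let `P` be the symmetric bilinear form with `P(f, f) = S(f)`. If `τ = σ(1 + σw)` satisfies
`S(τ) = 1 + σᵏ A`, then adding `v = σᵏ⁺¹ η` changes `S` by `2P(τ, v) + P(v, v)`, which is
`2(k + 1)(1 - k/d) σᵏ η` modulo `σᵏ⁺¹` because `|∇σ|² = 1` modulo `σ`. For `k < d` the coefficient
is non-zero, so `η = -A / (2(k + 1)(1 - k/d))` pushes the error to order `k + 1`; starting from
`k = 1` this reaches `k = d`.
-/

open Set
open scoped ContDiff

noncomputable section

namespace SingularYamabe

section General

variable {E : Type*} [NormedAddCommGroup E] [NormedSpace ℝ E]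
  {σ f g : E → ℝ} {Ω : Set E} {m n : ℕ}

theorem differentiableAt_of_contDiffOn {F : Type*} [NormedAddCommGroup F] [NormedSpace ℝ F]
    {f : E → F} (hΩ : IsOpen Ω) (hf : ContDiffOn ℝ ∞ f Ω) {x : E} (hx : x ∈ Ω) :
    DifferentiableAt ℝ f x :=
  (hf.differentiableOn (by simp)).differentiableAt (hΩ.mem_nhds hx)

/-- The paper's `f = O(σ ^ m)` on `Ω`. -/
def PowDvdOn (σ : E → ℝ) (Ω : Set E) (m : ℕ) (f : E → ℝ) : Prop :=
  ∃ h : E → ℝ, ContDiffOn ℝ ∞ h Ω ∧ ∀ x ∈ Ω, f x = σ x ^ m * h x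

namespace PowDvdOn

theorem congr (hf : PowDvdOn σ Ω m f) (hfg : EqOn f g Ω) : PowDvdOn σ Ω m g := by
  obtain ⟨h, hh, hfh⟩ := hf
  exact ⟨h, hh, fun x hx => (hfg hx).symm.trans (hfh x hx)⟩

theorem add (hf : PowDvdOn σ Ω m f) (hg : PowDvdOn σ Ω m g) :
    PowDvdOn σ Ω m fun x => f x + g x := by
  obtain ⟨h₁, hh₁, hf⟩ := hf
  obtain ⟨h₂, hh₂, hg⟩ := hg
  exact ⟨fun x => h₁ x + h₂ x, hh₁.add hh₂, fun x hx => by simp only [hf x hx, hg x hx]; ring⟩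

theorem sub (hf : PowDvdOn σ Ω m f) (hg : PowDvdOn σ Ω m g) :
    PowDvdOn σ Ω m fun x => f x - g x := by
  obtain ⟨h₁, hh₁, hf⟩ := hf
  obtain ⟨h₂, hh₂, hg⟩ := hg
  exact ⟨fun x => h₁ x - h₂ x, hh₁.sub hh₂, fun x hx => by simp only [hf x hx, hg x hx]; ring⟩

theorem mul (hf : PowDvdOn σ Ω m f) (hg : PowDvdOn σ Ω n g) :
    PowDvdOn σ Ω (m + n) fun x => f x * g x := by
  obtain ⟨h₁, hh₁, hf⟩ := hf
  obtain ⟨h₂, hh₂, hg⟩ := hg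
  exact ⟨fun x => h₁ x * h₂ x, hh₁.mul hh₂, fun x hx => by simp only [hf x hx, hg x hx]; ring⟩

theorem const_mul (hf : PowDvdOn σ Ω m f) (c : ℝ) : PowDvdOn σ Ω m fun x => c * f x := by
  obtain ⟨h, hh, hf⟩ := hf
  exact ⟨fun x => c * h x, contDiffOn_const.mul hh, fun x hx => by simp only [hf x hx]; ring⟩

theorem sum {ι : Type*} [Fintype ι] {F : ι → E → ℝ} (hF : ∀ i, PowDvdOn σ Ω m (F i)) :
    PowDvdOn σ Ω m fun x => ∑ i, F i x := by
  choose h hh hF using hF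
  exact ⟨fun x => ∑ i, h i x, ContDiffOn.sum fun i _ => hh i, fun x hx => by
    rw [Finset.mul_sum]; exact Finset.sum_congr rfl fun i _ => hF i x hx⟩

theorem mono (hσ : ContDiffOn ℝ ∞ σ Ω) (hmn : m ≤ n) (hf : PowDvdOn σ Ω n f) :
    PowDvdOn σ Ω m f := by
  obtain ⟨h, hh, hf⟩ := hf
  refine ⟨fun x => σ x ^ (n - m) * h x, (hσ.pow _).mul hh, fun x hx => ?_⟩
  rw [hf x hx, ← mul_assoc, ← pow_add, Nat.add_sub_cancel' hmn]

end PowDvdOn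

end General

variable {d m : ℕ} {i : Fin d} {σ f g h : EuclideanSpace ℝ (Fin d) → ℝ}
  {x : EuclideanSpace ℝ (Fin d)} {Ω : Set (EuclideanSpace ℝ (Fin d))}

def partialDeriv (i : Fin d) (f : EuclideanSpace ℝ (Fin d) → ℝ)
    (x : EuclideanSpace ℝ (Fin d)) : ℝ :=
  fderiv ℝ f x (EuclideanSpace.single i 1)

theorem partialDeriv_congr_of_eqOn (hΩ : IsOpen Ω) (hfg : EqOn f g Ω) (hx : x ∈ Ω) :
    partialDeriv i f x = partialDeriv i g x := by
  rw [partialDeriv, partialDeriv, (hfg.eventuallyEq_of_mem (hΩ.mem_nhds hx)).fderiv_eq]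

theorem partialDeriv_add (hf : DifferentiableAt ℝ f x) (hg : DifferentiableAt ℝ g x) :
    partialDeriv i (fun y => f y + g y) x = partialDeriv i f x + partialDeriv i g x := by
  simp [partialDeriv, fderiv_fun_add hf hg]

theorem partialDeriv_mul (hf : DifferentiableAt ℝ f x) (hg : DifferentiableAt ℝ g x) :
    partialDeriv i (fun y => f y * g y) x =
      f x * partialDeriv i g x + g x * partialDeriv i f x := by
  simp [partialDeriv, fderiv_fun_mul hf hg]

theorem partialDeriv_const_mul (hf : DifferentiableAt ℝ f x) (c : ℝ) :
    partialDeriv i (fun y => c * f y) x = c * partialDeriv i f x := by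
  simp [partialDeriv, fderiv_const_mul hf]

theorem partialDeriv_pow (hf : DifferentiableAt ℝ f x) (n : ℕ) :
    partialDeriv i (fun y => f y ^ n) x = n * f x ^ (n - 1) * partialDeriv i f x := by
  simp [partialDeriv, fderiv_fun_pow _ hf]

theorem contDiffOn_partialDeriv (hΩ : IsOpen Ω) (hf : ContDiffOn ℝ ∞ f Ω) :
    ContDiffOn ℝ ∞ (partialDeriv i f) Ω :=
  (hf.fderiv_of_isOpen hΩ (by simp)).clm_apply contDiffOn_const

theorem sq_norm_gradient_eq_sum (f : EuclideanSpace ℝ (Fin d) → ℝ) (x : EuclideanSpace ℝ (Fin d)) :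
    ‖gradient f x‖ ^ 2 = ∑ i, partialDeriv i f x ^ 2 := by
  rw [EuclideanSpace.norm_eq, Real.sq_sqrt (by positivity)]
  refine Finset.sum_congr rfl fun i _ => ?_
  rw [Real.norm_eq_abs, sq_abs, partialDeriv, ← toDual_gradient,
    InnerProductSpace.toDual_apply_apply, EuclideanSpace.inner_single_right]
  simp

theorem euclideanLaplacian_eq_sum (hΩ : IsOpen Ω) (hf : ContDiffOn ℝ ∞ f Ω) (hx : x ∈ Ω) :
    euclideanLaplacian f x = ∑ i, partialDeriv i (partialDeriv i f) x := by
  refine Finset.sum_congr rfl fun i _ => ?_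
  have hf' : DifferentiableAt ℝ (fderiv ℝ f) x :=
    differentiableAt_of_contDiffOn hΩ (hf.fderiv_of_isOpen hΩ (by simp)) hx
  unfold partialDeriv
  rw [iteratedFDeriv_two_apply, fderiv_clm_apply hf' (differentiableAt_const _)]
  simp

def gradDot (f g : EuclideanSpace ℝ (Fin d) → ℝ) (x : EuclideanSpace ℝ (Fin d)) : ℝ :=
  ∑ i, partialDeriv i f x * partialDeriv i g x

def coordLaplacian (f : EuclideanSpace ℝ (Fin d) → ℝ) (x : EuclideanSpace ℝ (Fin d)) : ℝ :=
  ∑ i, partialDeriv i (partialDeriv i f) x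

def yamabePairing (f g : EuclideanSpace ℝ (Fin d) → ℝ) (x : EuclideanSpace ℝ (Fin d)) : ℝ :=
  gradDot f g x - (f x * coordLaplacian g x + g x * coordLaplacian f x) / d

theorem gradDot_comm (f g : EuclideanSpace ℝ (Fin d) → ℝ) (x : EuclideanSpace ℝ (Fin d)) :
    gradDot f g x = gradDot g f x :=
  Finset.sum_congr rfl fun _ _ => mul_comm _ _

theorem gradDot_add_left (hf : DifferentiableAt ℝ f x) (hg : DifferentiableAt ℝ g x) :
    gradDot (fun y => f y + g y) h x = gradDot f h x + gradDot g h x := by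
  simp only [gradDot, partialDeriv_add hf hg, add_mul, Finset.sum_add_distrib]

theorem gradDot_mul_right (hg : DifferentiableAt ℝ g x) (hh : DifferentiableAt ℝ h x) :
    gradDot f (fun y => g y * h y) x = g x * gradDot f h x + h x * gradDot f g x := by
  simp only [gradDot, partialDeriv_mul hg hh, Finset.mul_sum, ← Finset.sum_add_distrib]
  exact Finset.sum_congr rfl fun _ _ => by ring

theorem gradDot_pow_right (hσ : DifferentiableAt ℝ σ x) (n : ℕ) :
    gradDot f (fun y => σ y ^ n) x = n * σ x ^ (n - 1) * gradDot f σ x := by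
  simp only [gradDot, partialDeriv_pow hσ, Finset.mul_sum]
  exact Finset.sum_congr rfl fun _ _ => by ring

theorem partialDeriv_partialDeriv_add (hΩ : IsOpen Ω) (hf : ContDiffOn ℝ ∞ f Ω)
    (hg : ContDiffOn ℝ ∞ g Ω) (hx : x ∈ Ω) :
    partialDeriv i (partialDeriv i fun y => f y + g y) x =
      partialDeriv i (partialDeriv i f) x + partialDeriv i (partialDeriv i g) x := by
  rw [partialDeriv_congr_of_eqOn hΩ (fun y hy => partialDeriv_add
    (differentiableAt_of_contDiffOn hΩ hf hy) (differentiableAt_of_contDiffOn hΩ hg hy)) hx]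
  exact partialDeriv_add (differentiableAt_of_contDiffOn hΩ (contDiffOn_partialDeriv hΩ hf) hx)
    (differentiableAt_of_contDiffOn hΩ (contDiffOn_partialDeriv hΩ hg) hx)

theorem partialDeriv_partialDeriv_mul (hΩ : IsOpen Ω) (hf : ContDiffOn ℝ ∞ f Ω)
    (hg : ContDiffOn ℝ ∞ g Ω) (hx : x ∈ Ω) :
    partialDeriv i (partialDeriv i fun y => f y * g y) x =
      f x * partialDeriv i (partialDeriv i g) x + g x * partialDeriv i (partialDeriv i f) x +
        2 * (partialDeriv i f x * partialDeriv i g x) := by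
  have hf' : ∀ {y}, y ∈ Ω → DifferentiableAt ℝ f y := differentiableAt_of_contDiffOn hΩ hf
  have hg' : ∀ {y}, y ∈ Ω → DifferentiableAt ℝ g y := differentiableAt_of_contDiffOn hΩ hg
  have hdf := differentiableAt_of_contDiffOn hΩ (contDiffOn_partialDeriv (i := i) hΩ hf) hx
  have hdg := differentiableAt_of_contDiffOn hΩ (contDiffOn_partialDeriv (i := i) hΩ hg) hx
  rw [partialDeriv_congr_of_eqOn hΩ (fun y hy => partialDeriv_mul (hf' hy) (hg' hy)) hx,
    partialDeriv_add (f := fun y => f y * _) (g := fun y => g y * _) ((hf' hx).mul hdg)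
      ((hg' hx).mul hdf), partialDeriv_mul (hf' hx) hdg,
    partialDeriv_mul (hg' hx) hdf]
  ring

theorem partialDeriv_partialDeriv_pow (hΩ : IsOpen Ω) (hσ : ContDiffOn ℝ ∞ σ Ω) (hx : x ∈ Ω)
    (m : ℕ) :
    partialDeriv i (partialDeriv i fun y => σ y ^ (m + 2)) x =
      (m + 2) * σ x ^ m * (σ x * partialDeriv i (partialDeriv i σ) x +
        (m + 1) * partialDeriv i σ x ^ 2) := by
  have hσ' : ∀ {y}, y ∈ Ω → DifferentiableAt ℝ σ y := differentiableAt_of_contDiffOn hΩ hσ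
  have hdσ := differentiableAt_of_contDiffOn hΩ (contDiffOn_partialDeriv (i := i) hΩ hσ) hx
  rw [partialDeriv_congr_of_eqOn hΩ
      (g := fun y => ((m + 2 : ℕ) : ℝ) * σ y ^ (m + 1) * partialDeriv i σ y)
      (fun y hy => partialDeriv_pow (hσ' hy) (m + 2)) hx,
    partialDeriv_mul (f := fun y => _ * σ y ^ (m + 1)) (((hσ' hx).pow _).const_mul _) hdσ,
    partialDeriv_const_mul (f := fun y => σ y ^ (m + 1)) ((hσ' hx).pow _),
    partialDeriv_pow (hσ' hx)]
  push_cast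
  ring

theorem coordLaplacian_add (hΩ : IsOpen Ω) (hf : ContDiffOn ℝ ∞ f Ω) (hg : ContDiffOn ℝ ∞ g Ω)
    (hx : x ∈ Ω) :
    coordLaplacian (fun y => f y + g y) x = coordLaplacian f x + coordLaplacian g x := by
  simp only [coordLaplacian, partialDeriv_partialDeriv_add hΩ hf hg hx, Finset.sum_add_distrib]

theorem coordLaplacian_mul (hΩ : IsOpen Ω) (hf : ContDiffOn ℝ ∞ f Ω) (hg : ContDiffOn ℝ ∞ g Ω)
    (hx : x ∈ Ω) :
    coordLaplacian (fun y => f y * g y) x =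
      f x * coordLaplacian g x + g x * coordLaplacian f x + 2 * gradDot f g x := by
  simp only [coordLaplacian, gradDot, partialDeriv_partialDeriv_mul hΩ hf hg hx,
    Finset.sum_add_distrib, Finset.mul_sum]

theorem coordLaplacian_pow (hΩ : IsOpen Ω) (hσ : ContDiffOn ℝ ∞ σ Ω) (hx : x ∈ Ω) (m : ℕ) :
    coordLaplacian (fun y => σ y ^ (m + 2)) x =
      (m + 2) * σ x ^ m * (σ x * coordLaplacian σ x + (m + 1) * gradDot σ σ x) := by
  simp only [coordLaplacian, gradDot, partialDeriv_partialDeriv_pow hΩ hσ hx, Finset.mul_sum,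
    ← Finset.sum_add_distrib]
  exact Finset.sum_congr rfl fun _ _ => by ring

theorem contDiffOn_gradDot (hΩ : IsOpen Ω) (hf : ContDiffOn ℝ ∞ f Ω) (hg : ContDiffOn ℝ ∞ g Ω) :
    ContDiffOn ℝ ∞ (gradDot f g) Ω :=
  ContDiffOn.sum fun _ _ => (contDiffOn_partialDeriv hΩ hf).mul (contDiffOn_partialDeriv hΩ hg)

theorem contDiffOn_coordLaplacian (hΩ : IsOpen Ω) (hf : ContDiffOn ℝ ∞ f Ω) :
    ContDiffOn ℝ ∞ (coordLaplacian f) Ω :=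
  ContDiffOn.sum fun _ _ => contDiffOn_partialDeriv hΩ (contDiffOn_partialDeriv hΩ hf)

theorem singularYamabeS_eq_yamabePairing (hΩ : IsOpen Ω) (hf : ContDiffOn ℝ ∞ f Ω) (hx : x ∈ Ω) :
    singularYamabeS f x = yamabePairing f f x := by
  rw [singularYamabeS, yamabePairing, sq_norm_gradient_eq_sum, euclideanLaplacian_eq_sum hΩ hf hx,
    gradDot, ← coordLaplacian]
  simp only [sq]
  ring

theorem yamabePairing_comm (f g : EuclideanSpace ℝ (Fin d) → ℝ) (x : EuclideanSpace ℝ (Fin d)) :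
    yamabePairing f g x = yamabePairing g f x := by
  rw [yamabePairing, yamabePairing, gradDot_comm, add_comm]

theorem yamabePairing_add_left (hΩ : IsOpen Ω) (hf : ContDiffOn ℝ ∞ f Ω) (hg : ContDiffOn ℝ ∞ g Ω)
    (hx : x ∈ Ω) :
    yamabePairing (fun y => f y + g y) h x = yamabePairing f h x + yamabePairing g h x := by
  rw [yamabePairing, yamabePairing, yamabePairing, coordLaplacian_add hΩ hf hg hx,
    gradDot_add_left (differentiableAt_of_contDiffOn hΩ hf hx)
      (differentiableAt_of_contDiffOn hΩ hg hx)]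
  ring

theorem yamabePairing_add_add (hΩ : IsOpen Ω) (hf : ContDiffOn ℝ ∞ f Ω)
    (hg : ContDiffOn ℝ ∞ g Ω) (hx : x ∈ Ω) :
    yamabePairing (fun y => f y + g y) (fun y => f y + g y) x =
      yamabePairing f f x + 2 * yamabePairing f g x + yamabePairing g g x := by
  rw [yamabePairing_add_left hΩ hf hg hx, yamabePairing_comm f, yamabePairing_comm g,
    yamabePairing_add_left hΩ hf hg hx, yamabePairing_add_left hΩ hf hg hx, yamabePairing_comm g f]
  ring

theorem powDvdOn_partialDeriv (hΩ : IsOpen Ω) (hσ : ContDiffOn ℝ ∞ σ Ω)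
    (hf : PowDvdOn σ Ω (m + 1) f) : PowDvdOn σ Ω m (partialDeriv i f) := by
  obtain ⟨h, hh, hfh⟩ := hf
  refine ⟨fun x => (m + 1) * h x * partialDeriv i σ x + σ x * partialDeriv i h x,
    ((contDiffOn_const.mul hh).mul (contDiffOn_partialDeriv hΩ hσ)).add
      (hσ.mul (contDiffOn_partialDeriv hΩ hh)), fun x hx => ?_⟩
  rw [partialDeriv_congr_of_eqOn hΩ hfh hx,
    partialDeriv_mul (f := fun y => σ y ^ (m + 1)) ((differentiableAt_of_contDiffOn hΩ hσ hx).pow _)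
      (differentiableAt_of_contDiffOn hΩ hh hx),
    partialDeriv_pow (differentiableAt_of_contDiffOn hΩ hσ hx)]
  push_cast
  ring

theorem powDvdOn_gradDot {p q : ℕ} (hΩ : IsOpen Ω) (hσ : ContDiffOn ℝ ∞ σ Ω)
    (hf : PowDvdOn σ Ω (p + 1) f) (hg : PowDvdOn σ Ω (q + 1) g) :
    PowDvdOn σ Ω (p + q) (gradDot f g) :=
  PowDvdOn.sum fun _ => (powDvdOn_partialDeriv hΩ hσ hf).mul (powDvdOn_partialDeriv hΩ hσ hg)

theorem powDvdOn_coordLaplacian (hΩ : IsOpen Ω) (hσ : ContDiffOn ℝ ∞ σ Ω)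
    (hf : PowDvdOn σ Ω (m + 2) f) :
    PowDvdOn σ Ω m (coordLaplacian f) :=
  PowDvdOn.sum fun _ => powDvdOn_partialDeriv hΩ hσ (powDvdOn_partialDeriv hΩ hσ hf)

theorem powDvdOn_yamabePairing {p q : ℕ} (hΩ : IsOpen Ω) (hσ : ContDiffOn ℝ ∞ σ Ω)
    (hf : PowDvdOn σ Ω (p + 2) f) (hg : PowDvdOn σ Ω (q + 2) g) :
    PowDvdOn σ Ω (p + q + 2) (yamabePairing f g) := by
  have hfg : PowDvdOn σ Ω (p + q + 2) (gradDot f g) :=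
    (powDvdOn_gradDot hΩ hσ hf hg).mono hσ (by omega)
  have hfΔg : PowDvdOn σ Ω (p + q + 2) fun x => f x * coordLaplacian g x :=
    (hf.mul (powDvdOn_coordLaplacian hΩ hσ hg)).mono hσ (by omega)
  have hgΔf : PowDvdOn σ Ω (p + q + 2) fun x => g x * coordLaplacian f x :=
    (hg.mul (powDvdOn_coordLaplacian hΩ hσ hf)).mono hσ (by omega)
  exact (hfg.sub ((hfΔg.add hgΔf).const_mul (1 / d))).congr fun x _ => by
    simp only [yamabePairing]; ring

theorem powDvdOn_gradDot_self_sub_one (hΩ : IsOpen Ω) (hσ : ContDiffOn ℝ ∞ σ Ω)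
    (hS : PowDvdOn σ Ω 1 fun x => singularYamabeS σ x - 1) :
    PowDvdOn σ Ω 1 fun x => gradDot σ σ x - 1 := by
  have hΔ : PowDvdOn σ Ω 1 fun x => 2 / d * σ x * coordLaplacian σ x :=
    ⟨fun x => 2 / d * coordLaplacian σ x,
      contDiffOn_const.mul (contDiffOn_coordLaplacian hΩ hσ), fun x _ => by ring⟩
  refine (hS.add hΔ).congr fun x hx => ?_
  simp only [singularYamabeS_eq_yamabePairing hΩ hσ hx, yamabePairing]
  ring

/-- The coefficient `(m + 2)(1 - (m + 1)/d)` vanishes exactly when `m + 1 = d`: this is why the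
expansion stops at order `d`. -/
theorem powDvdOn_yamabePairing_self_pow_mul_sub (hΩ : IsOpen Ω)
    {η : EuclideanSpace ℝ (Fin d) → ℝ} (hσ : ContDiffOn ℝ ∞ σ Ω) (hη : ContDiffOn ℝ ∞ η Ω)
    (m : ℕ) :
    PowDvdOn σ Ω (m + 2) fun x => yamabePairing σ (fun y => σ y ^ (m + 2) * η y) x -
      (m + 2) * (1 - (m + 1) / d) * σ x ^ (m + 1) * η x * gradDot σ σ x := by
  refine ⟨fun x => gradDot σ η x - (σ x * coordLaplacian η x +
      (m + 3) * η x * coordLaplacian σ x + 2 * (m + 2) * gradDot σ η x) / d, ?_, fun x hx => ?_⟩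
  · exact (contDiffOn_gradDot hΩ hσ hη).sub
      ((((hσ.mul (contDiffOn_coordLaplacian hΩ hη)).add
        ((contDiffOn_const.mul hη).mul (contDiffOn_coordLaplacian hΩ hσ))).add
        (contDiffOn_const.mul (contDiffOn_gradDot hΩ hσ hη))).div_const _)
  have hσx := differentiableAt_of_contDiffOn hΩ hσ hx
  dsimp only
  rw [yamabePairing, gradDot_mul_right (g := fun y => σ y ^ (m + 2)) (hσx.pow _)
      (differentiableAt_of_contDiffOn hΩ hη hx), gradDot_pow_right hσx,
    coordLaplacian_mul (f := fun y => σ y ^ (m + 2)) hΩ (hσ.pow _) hη hx,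
    coordLaplacian_pow hΩ hσ hx, gradDot_comm (fun y => σ y ^ (m + 2)), gradDot_pow_right hσx,
    gradDot_comm η]
  push_cast
  ring

theorem powDvdOn_yamabePairing_pow_mul_sub (hΩ : IsOpen Ω)
    {w η : EuclideanSpace ℝ (Fin d) → ℝ} (hσ : ContDiffOn ℝ ∞ σ Ω) (hw : ContDiffOn ℝ ∞ w Ω)
    (hη : ContDiffOn ℝ ∞ η Ω) (hgrad : PowDvdOn σ Ω 1 fun x => gradDot σ σ x - 1) (n : ℕ) :
    PowDvdOn σ Ω (n + 2) fun x =>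
      yamabePairing (fun z => σ z + σ z ^ 2 * w z) (fun z => σ z ^ (n + 2) * η z) x -
        (n + 2) * (1 - (n + 1) / d) * σ x ^ (n + 1) * η x := by
  have hlead := powDvdOn_yamabePairing_self_pow_mul_sub hΩ hσ hη n
  have hgrad' : PowDvdOn σ Ω (n + 1 + 1) fun x =>
      (n + 2) * (1 - (n + 1) / d) * σ x ^ (n + 1) * η x * (gradDot σ σ x - 1) :=
    PowDvdOn.mul ⟨fun x => (n + 2) * (1 - (n + 1) / d) * η x, contDiffOn_const.mul hη,
      fun x _ => by ring⟩ hgrad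
  have hrest : PowDvdOn σ Ω (n + 2)
      (yamabePairing (fun z => σ z ^ 2 * w z) (fun z => σ z ^ (n + 2) * η z)) := by
    simpa using powDvdOn_yamabePairing hΩ hσ (p := 0) ⟨w, hw, fun _ _ => rfl⟩
      ⟨η, hη, fun _ _ => rfl⟩
  refine ((hlead.add hgrad').add hrest).congr fun x hx => ?_
  beta_reduce
  rw [yamabePairing_add_left hΩ hσ ((hσ.pow 2).mul hw) hx]
  ring

theorem exists_powDvdOn_singularYamabeS_sub_one_succ (hΩ : IsOpen Ω)
    {w : EuclideanSpace ℝ (Fin d) → ℝ} {n : ℕ} (hn : n + 1 < d) (hσ : ContDiffOn ℝ ∞ σ Ω)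
    (hw : ContDiffOn ℝ ∞ w Ω) (hgrad : PowDvdOn σ Ω 1 fun x => gradDot σ σ x - 1)
    (hS : PowDvdOn σ Ω (n + 1) fun x => singularYamabeS (fun z => σ z * (1 + σ z * w z)) x - 1) :
    ∃ w' : EuclideanSpace ℝ (Fin d) → ℝ, ContDiffOn ℝ ∞ w' Ω ∧
      PowDvdOn σ Ω (n + 2) fun x => singularYamabeS (fun z => σ z * (1 + σ z * w' z)) x - 1 := by
  obtain ⟨A, hA, hSA⟩ := hS
  set c : ℝ := (n + 2) * (1 - (n + 1) / d)
  have hc : c ≠ 0 := by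
    have : ((n : ℝ) + 1) / d < 1 := by
      rw [div_lt_one (by exact_mod_cast (by omega : 0 < d))]
      exact_mod_cast hn
    exact (mul_pos (by positivity) (sub_pos.2 this)).ne'
  set η : EuclideanSpace ℝ (Fin d) → ℝ := fun x => -A x / (2 * c)
  have hη : ContDiffOn ℝ ∞ η Ω := hA.neg.div_const _
  have hτ : ContDiffOn ℝ ∞ (fun z => σ z + σ z ^ 2 * w z) Ω := hσ.add ((hσ.pow 2).mul hw)
  have hv : PowDvdOn σ Ω (n + 2) fun z => σ z ^ (n + 2) * η z := ⟨η, hη, fun _ _ => rfl⟩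
  have hvv := (powDvdOn_yamabePairing hΩ hσ hv hv).mono hσ (by omega : n + 2 ≤ n + n + 2)
  refine ⟨fun z => w z + σ z ^ n * η z, hw.add ((hσ.pow n).mul hη), ?_⟩
  refine (((powDvdOn_yamabePairing_pow_mul_sub hΩ hσ hw hη hgrad n).const_mul 2).add hvv).congr
    fun x hx => ?_
  have hSτ : singularYamabeS (fun z => σ z * (1 + σ z * w z)) x - 1 = σ x ^ (n + 1) * A x :=
    hSA x hx
  rw [show (fun z => σ z * (1 + σ z * w z)) = fun z => σ z + σ z ^ 2 * w z by funext; ring,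
    singularYamabeS_eq_yamabePairing hΩ hτ hx] at hSτ
  have hcη : 2 * c * η x = -A x := by
    change 2 * c * (-A x / (2 * c)) = -A x
    field_simp
  beta_reduce
  rw [show (fun z => σ z * (1 + σ z * (w z + σ z ^ n * η z))) =
      fun z => σ z + σ z ^ 2 * w z + σ z ^ (n + 2) * η z by funext; ring,
    singularYamabeS_eq_yamabePairing hΩ (hτ.add ((hσ.pow _).mul hη)) hx,
    yamabePairing_add_add hΩ hτ ((hσ.pow _).mul hη) hx]
  linear_combination -hSτ - σ x ^ (n + 1) * hcη

theorem exists_powDvdOn_singularYamabeS_sub_one (hΩ : IsOpen Ω) (hσ : ContDiffOn ℝ ∞ σ Ω)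
    (hS : PowDvdOn σ Ω 1 fun x => singularYamabeS σ x - 1) {n : ℕ} (hn : n + 1 ≤ d) :
    ∃ w : EuclideanSpace ℝ (Fin d) → ℝ, ContDiffOn ℝ ∞ w Ω ∧
      PowDvdOn σ Ω (n + 1) fun x => singularYamabeS (fun z => σ z * (1 + σ z * w z)) x - 1 := by
  induction n with
  | zero => exact ⟨0, contDiffOn_const, by simpa using hS⟩
  | succ n ih =>
    obtain ⟨w, hw, hSw⟩ := ih (by omega)
    exact exists_powDvdOn_singularYamabeS_sub_one_succ hΩ hn hσ hw
      (powDvdOn_gradDot_self_sub_one hΩ hσ hS) hSw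

end SingularYamabe

end

open SingularYamabe in
/-- Existence part of Theorem 4.6 (flat background): if `σ` is a normal defining density
(`S(σ) = 1 + σ·A` on `Ω` with `A` smooth), then there exist smooth `w, B` such that
`σ̄ := σ·(1 + σ·w)` is a conformal unit defining density: `S(σ̄) = 1 + σ^d·B` on `Ω`. -/
theorem conformal_unit_defining_density_exists
    (d : ℕ) (hd : 3 ≤ d) (Ω : Set (EuclideanSpace ℝ (Fin d))) (hΩ : IsOpen Ω)
    (σ A : EuclideanSpace ℝ (Fin d) → ℝ)
    (hσ : ContDiffOn ℝ (⊤ : ℕ∞) σ Ω) (hA : ContDiffOn ℝ (⊤ : ℕ∞) A Ω)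
    (h : ∀ x ∈ Ω, singularYamabeS σ x = 1 + σ x * A x) :
    ∃ w B : EuclideanSpace ℝ (Fin d) → ℝ,
      ContDiffOn ℝ (⊤ : ℕ∞) w Ω ∧ ContDiffOn ℝ (⊤ : ℕ∞) B Ω ∧
      ∀ x ∈ Ω,
        singularYamabeS (fun z => σ z * (1 + σ z * w z)) x = 1 + σ x ^ d * B x := by
  obtain ⟨w, hw, B, hB, hSB⟩ := exists_powDvdOn_singularYamabeS_sub_one hΩ hσ
    ⟨A, hA, fun x hx => by simp [h x hx]⟩ (n := d - 1) (by omega)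
  refine ⟨w, B, hw, hB, fun x hx => ?_⟩
  have hSx := hSB x hx
  rw [Nat.sub_add_cancel (by omega : 1 ≤ d)] at hSx
  linear_combination hSx
end

section
/- Let d ≥ 3, let Ω ⊆ ℝ^d be open, and let σ₁, σ₂ : Ω → ℝ be C^∞ with σ₂ = σ₁ · v for a C^∞ function v : Ω → ℝ that is everywhere strictly positive. Define S(σ) := ‖∇σ‖² − (2/d)·σ·Δσ, and suppose that for i = 1, 2 there are C^∞ functions B_i with S(σ_i)(x) = 1 + σ_i(x)^d · B_i(x) for all x ∈ Ω. Then there exists a C^∞ function C : Ω → ℝ such that B₂ = B₁ + σ₁ · C; in particular B₁(x) = B₂(x) for every x in the zero set of σ₁. -/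
/-!
Write `τ = σ₁`. By the product rule, `S(τ v) - 1 = v² (S(τ) - 1) + E(v)` with
`E(v) = v² - 1 + τ L(v)` (`yamabeDefect`), `L` built from the first and second derivatives of
`v`; the two unit equations say `E(v) = τ^d (v^d B₂ - v² B₁)`. Since `S(τ) = 1` where `τ = 0`,
`τ` vanishes on no open set, so a factor `τ^k` can be cancelled from an identity between
continuous functions. If `v = 1 + τ^k u` with `k ≥ 1`, expanding gives
`E(v) = τ^k (c_k u + τ F)` with `c_k = 2 + 2k (1 - (k+1)/d) v ‖∇τ‖²`, which equals
`2(k+1)(d-k)/d` on `{τ = 0}`. For `k < d` this is nonzero, so `u` is divisible by `τ`; starting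
from `v² - 1 = τ (…)` and `v + 1 > 0`, this gives `v = 1 + τ^d u`. At `k = d` the coefficient
`c_d = 2 - 2 v ‖∇τ‖²` is itself divisible by `τ`, and what remains is `B₂ - B₁ ≡ 0 mod τ`.
-/

open Filter Topology
open scoped ContDiff

section Calculus

variable {d : ℕ} {f g h τ u : EuclideanSpace ℝ (Fin d) → ℝ} {x : EuclideanSpace ℝ (Fin d)}

noncomputable def partialDeriv (i : Fin d) (f : EuclideanSpace ℝ (Fin d) → ℝ)
    (x : EuclideanSpace ℝ (Fin d)) : ℝ :=
  fderiv ℝ f x (EuclideanSpace.single i 1)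

lemma partialDeriv_congr (i : Fin d) (hfg : f =ᶠ[𝓝 x] g) :
    partialDeriv i f x = partialDeriv i g x := by
  rw [partialDeriv, hfg.fderiv_eq, partialDeriv]

lemma partialDeriv_const_add (i : Fin d) (c : ℝ) :
    partialDeriv i (fun y => c + f y) x = partialDeriv i f x := by
  rw [partialDeriv, fderiv_const_add, partialDeriv]

lemma partialDeriv_add (i : Fin d) (hf : DifferentiableAt ℝ f x) (hg : DifferentiableAt ℝ g x) :
    partialDeriv i (fun y => f y + g y) x = partialDeriv i f x + partialDeriv i g x := by
  simp [partialDeriv, fderiv_fun_add hf hg]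

lemma partialDeriv_mul (i : Fin d) (hf : DifferentiableAt ℝ f x) (hg : DifferentiableAt ℝ g x) :
    partialDeriv i (fun y => f y * g y) x
      = f x * partialDeriv i g x + g x * partialDeriv i f x := by
  simp [partialDeriv, fderiv_fun_mul hf hg]

lemma partialDeriv_pow (i : Fin d) (hf : DifferentiableAt ℝ f x) (n : ℕ) :
    partialDeriv i (fun y => f y ^ (n + 1)) x = (n + 1) * f x ^ n * partialDeriv i f x := by
  simp [partialDeriv, fderiv_fun_pow _ hf]

lemma ContDiffAt.partialDeriv {n m : WithTop ℕ∞} (hf : ContDiffAt ℝ n f x) (hmn : m + 1 ≤ n)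
    (i : Fin d) : ContDiffAt ℝ m (partialDeriv i f) x :=
  (hf.fderiv_right hmn).clm_apply contDiffAt_const

lemma ContDiffOn.partialDeriv {n m : WithTop ℕ∞} {Ω : Set (EuclideanSpace ℝ (Fin d))}
    (hΩ : IsOpen Ω) (hf : ContDiffOn ℝ n f Ω) (hmn : m + 1 ≤ n) (i : Fin d) :
    ContDiffOn ℝ m (partialDeriv i f) Ω :=
  (hf.fderiv_of_isOpen hΩ hmn).clm_apply contDiffOn_const

noncomputable def gradInner (f g : EuclideanSpace ℝ (Fin d) → ℝ) (x : EuclideanSpace ℝ (Fin d)) :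
    ℝ :=
  ∑ i, partialDeriv i f x * partialDeriv i g x

lemma gradient_apply_eq_partialDeriv (i : Fin d) : gradient f x i = partialDeriv i f x := by
  rw [partialDeriv, ← InnerProductSpace.toDual_symm_apply, EuclideanSpace.inner_single_right]
  simp [gradient]

lemma norm_gradient_sq_eq_gradInner : ‖gradient f x‖ ^ 2 = gradInner f f x := by
  rw [EuclideanSpace.norm_sq_eq, gradInner]
  simp [gradient_apply_eq_partialDeriv, sq]

lemma gradInner_comm : gradInner f g x = gradInner g f x := by
  simp only [gradInner, mul_comm]

lemma gradInner_congr (hf : f =ᶠ[𝓝 x] h) (hg : g =ᶠ[𝓝 x] u) :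
    gradInner f g x = gradInner h u x := by
  simp only [gradInner, partialDeriv_congr _ hf, partialDeriv_congr _ hg]

lemma gradInner_const_add_right (c : ℝ) : gradInner h (fun y => c + f y) x = gradInner h f x := by
  simp only [gradInner, partialDeriv_const_add]

lemma gradInner_mul_right (hf : DifferentiableAt ℝ f x) (hg : DifferentiableAt ℝ g x) :
    gradInner h (fun y => f y * g y) x = f x * gradInner h g x + g x * gradInner h f x := by
  simp only [gradInner, partialDeriv_mul _ hf hg, Finset.mul_sum, ← Finset.sum_add_distrib]
  exact Finset.sum_congr rfl fun _ _ => by ring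

lemma gradInner_pow_right (hf : DifferentiableAt ℝ f x) (n : ℕ) :
    gradInner h (fun y => f y ^ (n + 1)) x = (n + 1) * f x ^ n * gradInner h f x := by
  simp only [gradInner, partialDeriv_pow _ hf, Finset.mul_sum]
  exact Finset.sum_congr rfl fun _ _ => by ring

lemma gradInner_pow_mul_right (hτ : DifferentiableAt ℝ τ x) (hu : DifferentiableAt ℝ u x) (n : ℕ) :
    gradInner h (fun y => τ y ^ (n + 1) * u y) x
      = τ x ^ n * ((n + 1) * u x * gradInner h τ x + τ x * gradInner h u x) := by
  rw [gradInner_mul_right (f := fun y => τ y ^ (n + 1)) (hτ.pow _) hu, gradInner_pow_right hτ]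
  ring

lemma ContDiffOn.gradInner {n m : WithTop ℕ∞} {Ω : Set (EuclideanSpace ℝ (Fin d))}
    (hΩ : IsOpen Ω) (hf : ContDiffOn ℝ n f Ω) (hg : ContDiffOn ℝ n g Ω) (hmn : m + 1 ≤ n) :
    ContDiffOn ℝ m (gradInner f g) Ω :=
  ContDiffOn.sum fun i _ => (hf.partialDeriv hΩ hmn i).mul (hg.partialDeriv hΩ hmn i)

lemma euclideanLaplacian_eq_sum (hf : ContDiffAt ℝ 2 f x) :
    euclideanLaplacian f x = ∑ i, partialDeriv i (partialDeriv i f) x := by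
  have hdf : DifferentiableAt ℝ (fderiv ℝ f) x :=
    (hf.fderiv_right (m := 1) le_rfl).differentiableAt one_ne_zero
  refine Finset.sum_congr rfl fun i _ => ?_
  have hfi : partialDeriv i f = fun y => fderiv ℝ f y (EuclideanSpace.single i 1) := rfl
  rw [iteratedFDeriv_two_apply, partialDeriv, hfi, fderiv_clm_apply hdf (differentiableAt_const _)]
  simp

lemma euclideanLaplacian_congr (hfg : f =ᶠ[𝓝 x] g) :
    euclideanLaplacian f x = euclideanLaplacian g x := by
  rw [euclideanLaplacian, euclideanLaplacian, (hfg.iteratedFDeriv ℝ 2).eq_of_nhds]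

lemma euclideanLaplacian_const_add (c : ℝ) :
    euclideanLaplacian (fun y => c + f y) x = euclideanLaplacian f x := by
  have hc : fderiv ℝ (fun y => c + f y) = fderiv ℝ f := funext fun _ => fderiv_const_add c
  simp only [euclideanLaplacian, iteratedFDeriv_two_apply, hc]

lemma euclideanLaplacian_mul (hf : ContDiffAt ℝ 2 f x) (hg : ContDiffAt ℝ 2 g x) :
    euclideanLaplacian (fun y => f y * g y) x
      = f x * euclideanLaplacian g x + g x * euclideanLaplacian f x + 2 * gradInner f g x := by
  have hdiff : ∀ {φ : EuclideanSpace ℝ (Fin d) → ℝ}, ContDiffAt ℝ 2 φ x →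
      ∀ᶠ y in 𝓝 x, DifferentiableAt ℝ φ y := fun hφ =>
    (hφ.eventually (by simp)).mono fun _ hy => hy.differentiableAt (by simp)
  have hprod : ∀ i, partialDeriv i (fun y => f y * g y)
      =ᶠ[𝓝 x] fun y => f y * partialDeriv i g y + g y * partialDeriv i f y := fun i =>
    ((hdiff hf).and (hdiff hg)).mono fun _ hy => partialDeriv_mul i hy.1 hy.2
  have hf1 : ∀ i, DifferentiableAt ℝ (partialDeriv i f) x := fun i =>
    (hf.partialDeriv (m := 1) le_rfl i).differentiableAt one_ne_zero
  have hg1 : ∀ i, DifferentiableAt ℝ (partialDeriv i g) x := fun i =>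
    (hg.partialDeriv (m := 1) le_rfl i).differentiableAt one_ne_zero
  have hf0 := hf.differentiableAt (by simp)
  have hg0 := hg.differentiableAt (by simp)
  rw [euclideanLaplacian_eq_sum (hf.mul hg), euclideanLaplacian_eq_sum hf,
    euclideanLaplacian_eq_sum hg, gradInner, Finset.mul_sum, Finset.mul_sum, Finset.mul_sum,
    ← Finset.sum_add_distrib, ← Finset.sum_add_distrib]
  refine Finset.sum_congr rfl fun i _ => ?_
  rw [partialDeriv_congr i (hprod i), partialDeriv_add (f := fun y => f y * partialDeriv i g y)
      (g := fun y => g y * partialDeriv i f y) i (hf0.mul (hg1 i)) (hg0.mul (hf1 i)),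
    partialDeriv_mul i hf0 (hg1 i), partialDeriv_mul i hg0 (hf1 i)]
  ring

lemma mul_euclideanLaplacian_pow (hf : ContDiffAt ℝ 2 f x) (n : ℕ) :
    f x * euclideanLaplacian (fun y => f y ^ (n + 1)) x
      = (n + 1) * f x ^ (n + 1) * euclideanLaplacian f x
        + (n + 1) * n * f x ^ n * gradInner f f x := by
  induction n with
  | zero => simp
  | succ n ih =>
    have hpow : (fun y => f y ^ (n + 1 + 1)) = fun y => f y * f y ^ (n + 1) :=
      funext fun y => pow_succ' _ _
    rw [hpow, euclideanLaplacian_mul hf (hf.pow _), mul_add, mul_add, ← mul_assoc,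
      mul_comm (f x) (f x), mul_assoc, ih, gradInner_pow_right (hf.differentiableAt (by simp))]
    push_cast
    ring

lemma ContDiffOn.euclideanLaplacian {n m : WithTop ℕ∞} {Ω : Set (EuclideanSpace ℝ (Fin d))}
    (hΩ : IsOpen Ω) (hf : ContDiffOn ℝ n f Ω) (hmn : m + 2 ≤ n) :
    ContDiffOn ℝ m (euclideanLaplacian f) Ω := by
  have h1 : m + 1 + 1 ≤ n := by rwa [add_assoc, one_add_one_eq_two]
  refine (ContDiffOn.sum (s := Finset.univ) fun i _ =>
    (hf.partialDeriv hΩ h1 i).partialDeriv hΩ le_rfl i).congr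
    fun y hy => euclideanLaplacian_eq_sum ?_
  exact (hf.contDiffAt (hΩ.mem_nhds hy)).of_le (le_add_self.trans hmn)

lemma gradInner_pow_mul_self (hτ : DifferentiableAt ℝ τ x) (hu : DifferentiableAt ℝ u x) (n : ℕ) :
    gradInner (fun y => τ y ^ (n + 1) * u y) (fun y => τ y ^ (n + 1) * u y) x
      = τ x ^ (2 * n) * ((n + 1) ^ 2 * u x ^ 2 * gradInner τ τ x
          + 2 * (n + 1) * τ x * u x * gradInner τ u x + τ x ^ 2 * gradInner u u x) := by
  rw [gradInner_pow_mul_right hτ hu, gradInner_comm, gradInner_pow_mul_right hτ hu,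
    gradInner_comm (f := fun y => τ y ^ (n + 1) * u y), gradInner_pow_mul_right hτ hu,
    gradInner_comm (f := u) (g := τ)]
  ring

lemma mul_euclideanLaplacian_pow_mul (hτ : ContDiffAt ℝ 2 τ x) (hu : ContDiffAt ℝ 2 u x) (n : ℕ) :
    τ x * euclideanLaplacian (fun y => τ y ^ (n + 1) * u y) x
      = τ x ^ n * ((n + 1) * n * u x * gradInner τ τ x
          + τ x * ((n + 1) * u x * euclideanLaplacian τ x + 2 * (n + 1) * gradInner τ u x)
          + τ x ^ 2 * euclideanLaplacian u x) := by
  have hpow := mul_euclideanLaplacian_pow hτ n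
  rw [euclideanLaplacian_mul (hτ.pow _) hu, gradInner_comm,
    gradInner_pow_right (hτ.differentiableAt (by simp)), gradInner_comm (f := u)]
  linear_combination u x * hpow

end Calculus

section SingularYamabe

variable {d : ℕ} {τ v : EuclideanSpace ℝ (Fin d) → ℝ} {x : EuclideanSpace ℝ (Fin d)}

lemma singularYamabeS_eq_gradInner :
    singularYamabeS τ x = gradInner τ τ x - 2 / d * τ x * euclideanLaplacian τ x := by
  rw [singularYamabeS, norm_gradient_sq_eq_gradInner]

lemma singularYamabeS_congr (h : τ =ᶠ[𝓝 x] v) : singularYamabeS τ x = singularYamabeS v x := by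
  simp only [singularYamabeS, h.gradient_eq, euclideanLaplacian_congr h, h.eq_of_nhds]

lemma not_eventuallyEq_zero_of_singularYamabeS_eq_one (h : τ x = 0 → singularYamabeS τ x = 1) :
    ¬ τ =ᶠ[𝓝 x] 0 := by
  intro h0
  have h1 := h h0.eq_of_nhds
  rw [singularYamabeS_congr h0] at h1
  simp [singularYamabeS, gradient] at h1

noncomputable def yamabeDefect (τ v : EuclideanSpace ℝ (Fin d) → ℝ) (x : EuclideanSpace ℝ (Fin d)) :
    ℝ :=
  v x ^ 2 - 1 + τ x * (2 * (1 - 2 / d) * v x * gradInner τ v x + τ x * gradInner v v x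
    - 2 / d * τ x * v x * euclideanLaplacian v x)

lemma singularYamabeS_mul_sub_one (hτ : ContDiffAt ℝ 2 τ x) (hv : ContDiffAt ℝ 2 v x) :
    singularYamabeS (fun y => τ y * v y) x - 1
      = v x ^ 2 * (singularYamabeS τ x - 1) + yamabeDefect τ v x := by
  have hτ' := hτ.differentiableAt (by simp)
  have hv' := hv.differentiableAt (by simp)
  have hτv := gradInner_mul_right (h := fun y => τ y * v y) hτ' hv'
  have hvτv := gradInner_mul_right (h := v) hτ' hv'
  have hττv := gradInner_mul_right (h := τ) hτ' hv'
  rw [gradInner_comm] at hvτv hττv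
  rw [singularYamabeS_eq_gradInner, singularYamabeS_eq_gradInner, euclideanLaplacian_mul hτ hv,
    yamabeDefect, hτv, hvτv, hττv, gradInner_comm (f := v) (g := τ)]
  ring

end SingularYamabe

lemma eqOn_zero_of_pow_mul_eq_zero {X : Type*} [TopologicalSpace X] {Ω : Set X} {τ H : X → ℝ}
    (hΩ : IsOpen Ω) (hτ : ∀ x ∈ Ω, ¬ τ =ᶠ[𝓝 x] 0) (hH : ContinuousOn H Ω) {n : ℕ}
    (h : ∀ x ∈ Ω, τ x ^ n * H x = 0) : ∀ x ∈ Ω, H x = 0 := by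
  intro x hx
  by_contra hHx
  refine hτ x hx ?_
  filter_upwards [hΩ.mem_nhds hx, (hH.continuousAt (hΩ.mem_nhds hx)).eventually_ne hHx]
    with y hy hHy
  exact eq_zero_of_pow_eq_zero ((mul_eq_zero.mp (h y hy)).resolve_right hHy)

lemma exists_contDiffOn_eq_mul_of_mul_eq {E : Type*} [NormedAddCommGroup E] [NormedSpace ℝ E]
    {n : WithTop ℕ∞} {Ω : Set E} {f c τ g : E → ℝ} (hf : ContDiffOn ℝ n f Ω)
    (hc : ContDiffOn ℝ n c Ω) (hτ : ContDiffOn ℝ n τ Ω) (hg : ContDiffOn ℝ n g Ω)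
    (hc0 : ∀ x ∈ Ω, τ x = 0 → c x ≠ 0) (h : ∀ x ∈ Ω, f x * c x = τ x * g x) :
    ∃ q, ContDiffOn ℝ n q Ω ∧ ∀ x ∈ Ω, f x = τ x * q x := by
  have hpos : ∀ x ∈ Ω, c x ^ 2 + τ x ^ 2 ≠ 0 := fun x hx => by
    by_cases hτx : τ x = 0
    · simpa [hτx] using hc0 x hx hτx
    · positivity
  -- `τ (g c + f τ) = f (c² + τ²)` since `τ g = f c`
  refine ⟨fun x => (g x * c x + f x * τ x) / (c x ^ 2 + τ x ^ 2),
    ((hg.mul hc).add (hf.mul hτ)).div ((hc.pow 2).add (hτ.pow 2)) hpos, fun x hx => ?_⟩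
  field_simp [hpos x hx]
  linear_combination c x * h x hx

section Uniqueness

variable {d : ℕ} {Ω : Set (EuclideanSpace ℝ (Fin d))} {τ v u D B₁ B₂ : EuclideanSpace ℝ (Fin d) → ℝ}

lemma exists_yamabeDefect_eq_pow_mul (hΩ : IsOpen Ω) (hτ : ContDiffOn ℝ ∞ τ Ω)
    (hv : ContDiffOn ℝ ∞ v Ω) (hu : ContDiffOn ℝ ∞ u Ω) (m : ℕ)
    (hvu : ∀ x ∈ Ω, v x = 1 + τ x ^ (m + 1) * u x) :
    ∃ F, ContDiffOn ℝ ∞ F Ω ∧ ∀ x ∈ Ω, yamabeDefect τ v x = τ x ^ (m + 1) *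
      (u x * (2 + 2 * (m + 1) * (1 - (m + 2) / d) * v x * gradInner τ τ x) + τ x * F x) := by
  have hτ1 := hτ.gradInner hΩ hτ (m := ∞) (by norm_cast)
  have hτu := hτ.gradInner hΩ hu (m := ∞) (by norm_cast)
  have hu1 := hu.gradInner hΩ hu (m := ∞) (by norm_cast)
  have hτ2 := hτ.euclideanLaplacian hΩ (m := ∞) (by norm_cast)
  have hu2 := hu.euclideanLaplacian hΩ (m := ∞) (by norm_cast)
  refine ⟨fun y => τ y ^ m * u y ^ 2 + 2 * (1 - 2 / d) * v y * gradInner τ u y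
      + τ y ^ m * ((m + 1) ^ 2 * u y ^ 2 * gradInner τ τ y
        + 2 * (m + 1) * τ y * u y * gradInner τ u y + τ y ^ 2 * gradInner u u y)
      - 2 / d * v y * ((m + 1) * u y * euclideanLaplacian τ y + 2 * (m + 1) * gradInner τ u y
        + τ y * euclideanLaplacian u y), by fun_prop, fun x hx => ?_⟩
  have hτx := (hτ.contDiffAt (hΩ.mem_nhds hx)).of_le (m := 2) ENat.LEInfty.out
  have hux := (hu.contDiffAt (hΩ.mem_nhds hx)).of_le (m := 2) ENat.LEInfty.out
  have hvw : v =ᶠ[𝓝 x] fun y => 1 + τ y ^ (m + 1) * u y :=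
    eventuallyEq_of_mem (hΩ.mem_nhds hx) hvu
  have hA : gradInner τ v x
      = τ x ^ m * ((m + 1) * u x * gradInner τ τ x + τ x * gradInner τ u x) := by
    rw [gradInner_congr EventuallyEq.rfl hvw, gradInner_const_add_right,
      gradInner_pow_mul_right (hτx.differentiableAt (by simp)) (hux.differentiableAt (by simp))]
  have hP : gradInner v v x
      = τ x ^ (2 * m) * ((m + 1) ^ 2 * u x ^ 2 * gradInner τ τ x
          + 2 * (m + 1) * τ x * u x * gradInner τ u x + τ x ^ 2 * gradInner u u x) := by
    rw [gradInner_congr hvw hvw, gradInner_const_add_right, gradInner_comm,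
      gradInner_const_add_right,
      gradInner_pow_mul_self (hτx.differentiableAt (by simp)) (hux.differentiableAt (by simp))]
  have hQ : τ x * euclideanLaplacian v x
      = τ x ^ m * ((m + 1) * m * u x * gradInner τ τ x
          + τ x * ((m + 1) * u x * euclideanLaplacian τ x + 2 * (m + 1) * gradInner τ u x)
          + τ x ^ 2 * euclideanLaplacian u x) := by
    rw [euclideanLaplacian_congr hvw, euclideanLaplacian_const_add,
      mul_euclideanLaplacian_pow_mul hτx hux]
  rw [yamabeDefect, hA, hP]
  linear_combination (v x + 1 + τ x ^ (m + 1) * u x) * hvu x hx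
    - 2 / d * τ x * v x * hQ

lemma yamabeDefect_eq_of_singularYamabeS_eq (hΩ : IsOpen Ω) {σ : EuclideanSpace ℝ (Fin d) → ℝ}
    (hτ : ContDiffOn ℝ ∞ τ Ω) (hv : ContDiffOn ℝ ∞ v Ω) (hσ : ∀ x ∈ Ω, σ x = τ x * v x)
    (h₁ : ∀ x ∈ Ω, singularYamabeS τ x = 1 + τ x ^ d * B₁ x)
    (h₂ : ∀ x ∈ Ω, singularYamabeS σ x = 1 + σ x ^ d * B₂ x) :
    ∀ x ∈ Ω, yamabeDefect τ v x = τ x ^ d * (v x ^ d * B₂ x - v x ^ 2 * B₁ x) := by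
  intro x hx
  have hmul := singularYamabeS_mul_sub_one
    ((hτ.contDiffAt (hΩ.mem_nhds hx)).of_le (m := 2) ENat.LEInfty.out)
    ((hv.contDiffAt (hΩ.mem_nhds hx)).of_le (m := 2) ENat.LEInfty.out)
  rw [← singularYamabeS_congr (eventuallyEq_of_mem (hΩ.mem_nhds hx) hσ), h₂ x hx, h₁ x hx,
    hσ x hx] at hmul
  linear_combination -hmul

lemma exists_eq_one_add_mul (hd : d ≠ 0) (hΩ : IsOpen Ω) (hτ : ContDiffOn ℝ ∞ τ Ω)
    (hv : ContDiffOn ℝ ∞ v Ω) (hD : ContDiffOn ℝ ∞ D Ω) (hvpos : ∀ x ∈ Ω, 0 < v x)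
    (hdef : ∀ x ∈ Ω, yamabeDefect τ v x = τ x ^ d * D x) :
    ∃ u, ContDiffOn ℝ ∞ u Ω ∧ ∀ x ∈ Ω, v x = 1 + τ x * u x := by
  have hτv := hτ.gradInner hΩ hv (m := ∞) (by norm_cast)
  have hvv := hv.gradInner hΩ hv (m := ∞) (by norm_cast)
  have hv2 := hv.euclideanLaplacian hΩ (m := ∞) (by norm_cast)
  obtain ⟨q, hq, hvq⟩ := exists_contDiffOn_eq_mul_of_mul_eq (f := fun y => v y - 1)
    (c := fun y => v y + 1) (τ := τ) (g := fun y => τ y ^ (d - 1) * D y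
      - (2 * (1 - 2 / d) * v y * gradInner τ v y + τ y * gradInner v v y
        - 2 / d * τ y * v y * euclideanLaplacian v y))
    (by fun_prop) (by fun_prop) hτ (by fun_prop)
    (fun x hx _ => (add_pos (hvpos x hx) one_pos).ne') fun x hx => by
      have hpow : τ x ^ d = τ x * τ x ^ (d - 1) := by
        rw [← pow_succ', Nat.sub_add_cancel (Nat.one_le_iff_ne_zero.mpr hd)]
      have := hdef x hx
      rw [yamabeDefect, hpow] at this
      linear_combination this
  exact ⟨q, hq, fun x hx => by linear_combination hvq x hx⟩

lemma exists_eq_one_add_pow_succ_mul (hΩ : IsOpen Ω) (hτ : ContDiffOn ℝ ∞ τ Ω)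
    (hv : ContDiffOn ℝ ∞ v Ω) (hu : ContDiffOn ℝ ∞ u Ω) (hD : ContDiffOn ℝ ∞ D Ω)
    (hτ₁ : ∀ x ∈ Ω, τ x = 0 → singularYamabeS τ x = 1)
    (hdef : ∀ x ∈ Ω, yamabeDefect τ v x = τ x ^ d * D x) {m : ℕ} (hmd : m + 1 < d)
    (hvu : ∀ x ∈ Ω, v x = 1 + τ x ^ (m + 1) * u x) :
    ∃ u', ContDiffOn ℝ ∞ u' Ω ∧ ∀ x ∈ Ω, v x = 1 + τ x ^ (m + 2) * u' x := by
  obtain ⟨F, hF, hdefF⟩ := exists_yamabeDefect_eq_pow_mul hΩ hτ hv hu m hvu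
  have hτ1 := hτ.gradInner hΩ hτ (m := ∞) (by norm_cast)
  have hpow : ∀ y, τ y ^ d = τ y ^ (m + 1) * (τ y * τ y ^ (d - (m + 2))) := fun y => by
    rw [← pow_succ', ← pow_add]
    congr 1
    omega
  have hzero : ∀ x ∈ Ω, u x * (2 + 2 * (m + 1) * (1 - (m + 2) / d) * v x * gradInner τ τ x)
      = τ x * (τ x ^ (d - (m + 2)) * D x - F x) := by
    have := eqOn_zero_of_pow_mul_eq_zero hΩ
      (fun x hx => not_eventuallyEq_zero_of_singularYamabeS_eq_one (hτ₁ x hx))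
      (H := fun y => u y * (2 + 2 * (m + 1) * (1 - (m + 2) / d) * v y * gradInner τ τ y)
        + τ y * (F y - τ y ^ (d - (m + 2)) * D y)) (n := m + 1)
      (ContDiffOn.continuousOn (n := ∞) (by fun_prop))
      fun x hx => by linear_combination (hdefF x hx).symm.trans (hdef x hx) + D x * hpow x
    exact fun x hx => by linear_combination this x hx
  have hc0 : ∀ x ∈ Ω, τ x = 0 →
      2 + 2 * (m + 1) * (1 - (m + 2) / d) * v x * gradInner τ τ x ≠ 0 := by
    intro x hx h0
    have hv1 : v x = 1 := by simp [hvu x hx, h0]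
    have hP1 : gradInner τ τ x = 1 := by
      simpa [singularYamabeS_eq_gradInner, h0] using hτ₁ x hx h0
    have hmd' : ((m : ℝ) + 2) / d ≤ 1 :=
      div_le_one_of_le₀ (by exact_mod_cast hmd) (Nat.cast_nonneg d)
    rw [hv1, hP1]
    nlinarith
  obtain ⟨q, hq, huq⟩ := exists_contDiffOn_eq_mul_of_mul_eq hu (by fun_prop) hτ (by fun_prop)
    hc0 hzero
  exact ⟨q, hq, fun x hx => by rw [hvu x hx, huq x hx]; ring⟩

lemma exists_eq_one_add_pow_mul (hd : d ≠ 0) (hΩ : IsOpen Ω) (hτ : ContDiffOn ℝ ∞ τ Ω)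
    (hv : ContDiffOn ℝ ∞ v Ω) (hD : ContDiffOn ℝ ∞ D Ω) (hvpos : ∀ x ∈ Ω, 0 < v x)
    (hτ₁ : ∀ x ∈ Ω, τ x = 0 → singularYamabeS τ x = 1)
    (hdef : ∀ x ∈ Ω, yamabeDefect τ v x = τ x ^ d * D x) {k : ℕ} (hkd : k ≤ d) :
    ∃ u, ContDiffOn ℝ ∞ u Ω ∧ ∀ x ∈ Ω, v x = 1 + τ x ^ k * u x := by
  induction k with
  | zero => exact ⟨fun y => v y - 1, hv.sub contDiffOn_const, fun x _ => by ring⟩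
  | succ k ih =>
    rcases k with _ | m
    · simpa using exists_eq_one_add_mul hd hΩ hτ hv hD hvpos hdef
    · obtain ⟨u, hu, hvu⟩ := ih (by omega)
      exact exists_eq_one_add_pow_succ_mul hΩ hτ hv hu hD hτ₁ hdef hkd hvu

lemma exists_eq_add_mul_of_eq_one_add_pow (hd : d ≠ 0) (hΩ : IsOpen Ω)
    (hτ : ContDiffOn ℝ ∞ τ Ω) (hv : ContDiffOn ℝ ∞ v Ω) (hu : ContDiffOn ℝ ∞ u Ω)
    (hB₁ : ContDiffOn ℝ ∞ B₁ Ω) (hB₂ : ContDiffOn ℝ ∞ B₂ Ω)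
    (h₁ : ∀ x ∈ Ω, singularYamabeS τ x = 1 + τ x ^ d * B₁ x)
    (hdef : ∀ x ∈ Ω, yamabeDefect τ v x = τ x ^ d * (v x ^ d * B₂ x - v x ^ 2 * B₁ x))
    (hvu : ∀ x ∈ Ω, v x = 1 + τ x ^ d * u x) :
    ∃ C, ContDiffOn ℝ ∞ C Ω ∧ ∀ x ∈ Ω, B₂ x = B₁ x + τ x * C x := by
  obtain ⟨m, rfl⟩ : ∃ m, d = m + 1 := ⟨d - 1, by omega⟩
  obtain ⟨F, hF, hdefF⟩ := exists_yamabeDefect_eq_pow_mul hΩ hτ hv hu m hvu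
  have hcoef : 2 * ((m : ℝ) + 1) * (1 - ((m : ℝ) + 2) / ((m + 1 : ℕ) : ℝ)) = -2 := by
    push_cast
    field_simp
    ring
  simp only [hcoef] at hdefF
  have hτ1 := hτ.gradInner hΩ hτ (m := ∞) (by norm_cast)
  have hτ2 := hτ.euclideanLaplacian hΩ (m := ∞) (by norm_cast)
  have hD : ∀ x ∈ Ω, v x ^ (m + 1) * B₂ x - v x ^ 2 * B₁ x
      = u x * (2 + -2 * v x * gradInner τ τ x) + τ x * F x := by
    have := eqOn_zero_of_pow_mul_eq_zero hΩ
      (fun x hx => not_eventuallyEq_zero_of_singularYamabeS_eq_one (τ := τ)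
        fun h0 => by simp [h₁ x hx, h0])
      (H := fun y => u y * (2 + -2 * v y * gradInner τ τ y) + τ y * F y
        - (v y ^ (m + 1) * B₂ y - v y ^ 2 * B₁ y)) (n := m + 1)
      (ContDiffOn.continuousOn (n := ∞) (by fun_prop))
      fun x hx => by linear_combination (hdefF x hx).symm.trans (hdef x hx)
    exact fun x hx => by linear_combination -this x hx
  refine ⟨fun y => F y - 2 * u y * (τ y ^ m * (B₁ y + u y * gradInner τ τ y)
      + 2 / (m + 1 : ℕ) * euclideanLaplacian τ y)
      - τ y ^ m * u y * ((∑ j ∈ Finset.range (m + 1), v y ^ j) * B₂ y - (v y + 1) * B₁ y),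
    by fun_prop, fun x hx => ?_⟩
  have hS := h₁ x hx
  rw [singularYamabeS_eq_gradInner] at hS
  linear_combination hD x hx
    + ((v x + 1) * B₁ x - (∑ j ∈ Finset.range (m + 1), v x ^ j) * B₂ x
      - 2 * u x * gradInner τ τ x) * hvu x hx
    + B₂ x * geom_sum_mul (v x) (m + 1) - 2 * u x * hS

end Uniqueness

theorem obstruction_density_well_defined_general
    (d : ℕ) (hd : 3 ≤ d) (Ω : Set (EuclideanSpace ℝ (Fin d))) (hΩ : IsOpen Ω)
    (σ₁ σ₂ v : EuclideanSpace ℝ (Fin d) → ℝ)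
    (hσ₁ : ContDiffOn ℝ (⊤ : ℕ∞) σ₁ Ω)
    (hv : ContDiffOn ℝ (⊤ : ℕ∞) v Ω) (hvpos : ∀ x ∈ Ω, 0 < v x)
    (hfac : ∀ x ∈ Ω, σ₂ x = σ₁ x * v x)
    (B₁ B₂ : EuclideanSpace ℝ (Fin d) → ℝ)
    (hB₁ : ContDiffOn ℝ (⊤ : ℕ∞) B₁ Ω) (hB₂ : ContDiffOn ℝ (⊤ : ℕ∞) B₂ Ω)
    (h₁ : ∀ x ∈ Ω, singularYamabeS σ₁ x = 1 + σ₁ x ^ d * B₁ x)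
    (h₂ : ∀ x ∈ Ω, singularYamabeS σ₂ x = 1 + σ₂ x ^ d * B₂ x) :
    (∃ C : EuclideanSpace ℝ (Fin d) → ℝ, ContDiffOn ℝ (⊤ : ℕ∞) C Ω ∧
      ∀ x ∈ Ω, B₂ x = B₁ x + σ₁ x * C x) ∧
    ∀ x ∈ Ω, σ₁ x = 0 → B₁ x = B₂ x := by
  have hd0 : d ≠ 0 := by omega
  have hdef := yamabeDefect_eq_of_singularYamabeS_eq hΩ hσ₁ hv hfac h₁ h₂
  obtain ⟨u, hu, hvu⟩ := exists_eq_one_add_pow_mul hd0 hΩ hσ₁ hv (by fun_prop) hvpos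
    (fun x hx h0 => by simp [h₁ x hx, h0, hd0]) hdef le_rfl
  obtain ⟨C, hC, hBC⟩ :=
    exists_eq_add_mul_of_eq_one_add_pow hd0 hΩ hσ₁ hv hu hB₁ hB₂ h₁ hdef hvu
  exact ⟨⟨C, hC, hBC⟩, fun x hx h0 => by simpa [h0] using (hBC x hx).symm⟩

/-- Flat-background instance of Theorem 4.7: if `σ₁` and `σ₂ = σ₁·v` (`v` smooth, positive)
are both conformal unit defining densities with `S(σᵢ) = 1 + σᵢ^d·Bᵢ` on `Ω`, then
`B₂ = B₁ + σ₁·C` for a smooth `C`; in particular `B₁ = B₂` on the zero set of `σ₁`, so the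
obstruction density `ℬ = B|_Σ` is independent of the choice of defining density. -/
theorem obstruction_density_well_defined
    (d : ℕ) (hd : 3 ≤ d) (Ω : Set (EuclideanSpace ℝ (Fin d))) (hΩ : IsOpen Ω)
    (σ₁ σ₂ v : EuclideanSpace ℝ (Fin d) → ℝ)
    (hσ₁ : ContDiffOn ℝ (⊤ : ℕ∞) σ₁ Ω) (hσ₂ : ContDiffOn ℝ (⊤ : ℕ∞) σ₂ Ω)
    (hv : ContDiffOn ℝ (⊤ : ℕ∞) v Ω) (hvpos : ∀ x ∈ Ω, 0 < v x)
    (hfac : ∀ x ∈ Ω, σ₂ x = σ₁ x * v x)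
    (B₁ B₂ : EuclideanSpace ℝ (Fin d) → ℝ)
    (hB₁ : ContDiffOn ℝ (⊤ : ℕ∞) B₁ Ω) (hB₂ : ContDiffOn ℝ (⊤ : ℕ∞) B₂ Ω)
    (h₁ : ∀ x ∈ Ω, singularYamabeS σ₁ x = 1 + σ₁ x ^ d * B₁ x)
    (h₂ : ∀ x ∈ Ω, singularYamabeS σ₂ x = 1 + σ₂ x ^ d * B₂ x) :
    (∃ C : EuclideanSpace ℝ (Fin d) → ℝ, ContDiffOn ℝ (⊤ : ℕ∞) C Ω ∧
      ∀ x ∈ Ω, B₂ x = B₁ x + σ₁ x * C x) ∧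
    ∀ x ∈ Ω, σ₁ x = 0 → B₁ x = B₂ x :=
  obstruction_density_well_defined_general d hd Ω hΩ σ₁ σ₂ v hσ₁ hv hvpos hfac B₁ B₂ hB₁ hB₂ h₁ h₂
end
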